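/- arXiv:1801.04215 — 5 statements merged into one kernel-verified Lean document; each statement's English description precedes it below -/
import Mathlib

section
/- Let T be a nonnegative tensor and let σ, σ̃ be shape partitions of T with σ ⊑ σ̃. If T is σ-strictly nonnegative, then T is σ̃-strictly nonnegative. -/
open scoped BigOperators

namespace TensorPF

/-- A shape partition of the dimension vector `N : Fin m → ℕ` into `d` blocks.
`β` assigns to each index position its block, `rep i` is the minimal element `s_i`
of block `i`, and all positions in a block carry the same dimension. -/
structure ShapePartition (m d : ℕ) (N : Fin m → ℕ) where
  β : Fin m → Fin d
  surj : Function.Surjective β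
  rep : Fin d → Fin m
  rep_mem : ∀ i, β (rep i) = i
  rep_min : ∀ (i : Fin d) (j : Fin m), β j = i → rep i ≤ j
  dim_eq : ∀ j j' : Fin m, β j = β j' → N j = N j'

namespace ShapePartition

variable {m d : ℕ} {N : Fin m → ℕ}

/-- `n i = N (s_i)`, the common dimension of block `i`. -/
def n (σ : ShapePartition m d N) (i : Fin d) : ℕ := N (σ.rep i)

/-- `ν i = |σ_i|`, the size of block `i`. -/
def ν (σ : ShapePartition m d N) (i : Fin d) : ℕ :=
  (Finset.univ.filter (fun k => σ.β k = i)).card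

theorem dim_n (σ : ShapePartition m d N) (k : Fin m) : N k = σ.n (σ.β k) :=
  σ.dim_eq k (σ.rep (σ.β k)) (σ.rep_mem (σ.β k)).symm

/-- `x^[σ]` : the `m`-tuple of vectors whose `k`-th component is `x (β k)`. -/
def blowup (σ : ShapePartition m d N) (x : ∀ i, Fin (σ.n i) → ℝ) :
    ∀ k, Fin (N k) → ℝ :=
  fun k t => x (σ.β k) (Fin.cast (σ.dim_n k) t)

end ShapePartition

/-- The multilinear form `f_T(z) = Σ_J T_J ∏_k z_{k, J k}`. -/
def mform {m : ℕ} {N : Fin m → ℕ} (T : (∀ k, Fin (N k)) → ℝ)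
    (z : ∀ k, Fin (N k) → ℝ) : ℝ :=
  ∑ J : ∀ k, Fin (N k), T J * ∏ k, z k (J k)

/-- `𝒯_{k,j}(z)`, the partial derivative of `f_T` with respect to `z_{k,j}`. -/
def tmap {m : ℕ} {N : Fin m → ℕ} (T : (∀ k, Fin (N k)) → ℝ)
    (k : Fin m) (j : Fin (N k)) (z : ∀ l, Fin (N l) → ℝ) : ℝ :=
  ∑ J : ∀ l, Fin (N l),
    if J k = j then T J * ∏ l ∈ Finset.univ.erase k, z l (J l) else 0

/-- The `ℓ^q` norm of a vector. -/
noncomputable def pnorm {n : ℕ} (q : ℝ) (v : Fin n → ℝ) : ℝ :=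
  (∑ j, |v j| ^ q) ^ (1 / q)

/-- `ψ_q(v)_j = |v_j|^{q-2} v_j`. -/
noncomputable def psi {n : ℕ} (q : ℝ) (v : Fin n → ℝ) : Fin n → ℝ :=
  fun j => |v j| ^ (q - 2) * v j

/-- Spectral radius of a real matrix: the supremum of the moduli of its
complex eigenvalues. -/
noncomputable def rho {d : ℕ} (A : Matrix (Fin d) (Fin d) ℝ) : ℝ :=
  sSup {r : ℝ | ∃ μ : ℂ, μ ∈ spectrum ℂ (A.map (fun t : ℝ => (t : ℂ))) ∧ r = ‖μ‖}

/-- Hilbert projective (semi-)metric on positive vectors. -/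
noncomputable def hilbertDist {n : ℕ} (u v : Fin n → ℝ) : ℝ :=
  Real.log ((⨆ j, u j / v j) * (⨆ j, v j / u j))

namespace ShapePartition

variable {m d : ℕ} {N : Fin m → ℕ}

/-- The matrix `M` of Definition 2.5: the Jacobian of `x ↦ 𝒯_{s_i,t}(x^[σ])`
evaluated at the all-ones tuple. -/
noncomputable def Mmat (σ : ShapePartition m d N) (T : (∀ k, Fin (N k)) → ℝ) :
    (Σ i, Fin (σ.n i)) → (Σ i, Fin (σ.n i)) → ℝ :=
  fun a b =>
    fderiv ℝ (fun x : ∀ i, Fin (σ.n i) → ℝ => tmap T (σ.rep a.1) a.2 (σ.blowup x))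
      (fun _ _ => (1 : ℝ)) (Pi.single b.1 (Pi.single b.2 1))

/-- `T` is σ-strictly nonnegative: every row of `M` has a nonzero entry. -/
def StrictlyNonneg (σ : ShapePartition m d N) (T : (∀ k, Fin (N k)) → ℝ) : Prop :=
  ∀ a : Σ i, Fin (σ.n i), ∃ b : Σ i, Fin (σ.n i), σ.Mmat T a b ≠ 0

/-- `T` is σ-weakly irreducible: the matrix `M` is irreducible, i.e. the digraph
with an edge `a → b` whenever `M a b > 0` is strongly connected. -/
def WeaklyIrreducible (σ : ShapePartition m d N) (T : (∀ k, Fin (N k)) → ℝ) : Prop :=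
  ∀ a b : Σ i, Fin (σ.n i),
    Relation.TransGen (fun a b : Σ i, Fin (σ.n i) => 0 < σ.Mmat T a b) a b

/-- `T` is σ-strongly irreducible. -/
def StronglyIrreducible (σ : ShapePartition m d N) (T : (∀ k, Fin (N k)) → ℝ) : Prop :=
  ∀ x : ∀ i, Fin (σ.n i) → ℝ, (∀ i j, 0 ≤ x i j) → (∀ i, x i ≠ 0) →
    ¬ (∀ i j, 0 < x i j) →
    ∃ (k : Fin d) (l : Fin (σ.n k)), x k l = 0 ∧ 0 < tmap T (σ.rep k) l (σ.blowup x)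

/-- `T` is σ-symmetric: invariant under all block-preserving permutations
of the index positions. -/
def PartSymmetric (σ : ShapePartition m d N) (T : (∀ k, Fin (N k)) → ℝ) : Prop :=
  ∀ (π : Equiv.Perm (Fin m)) (hπ : ∀ k, σ.β (π k) = σ.β k) (J : ∀ k, Fin (N k)),
    T (fun k => Fin.cast (σ.dim_eq (π k) k (hπ k)) (J (π k))) = T J

/-- `(lam, x)` is a `(σ,p)`-eigenpair of `T`. -/
noncomputable def IsEigenpair (σ : ShapePartition m d N) (T : (∀ k, Fin (N k)) → ℝ)
    (p : Fin d → ℝ) (lam : ℝ) (x : ∀ i, Fin (σ.n i) → ℝ) : Prop :=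
  (∀ i, pnorm (p i) (x i) = 1) ∧
  ∀ (i : Fin d) (j : Fin (σ.n i)),
    tmap T (σ.rep i) j (σ.blowup x) = lam * psi (p i) (x i) j

/-- The `(σ,p)`-spectral radius `r^{(σ,p)}(T)`. -/
noncomputable def specRad (σ : ShapePartition m d N) (T : (∀ k, Fin (N k)) → ℝ)
    (p : Fin d → ℝ) : ℝ :=
  sSup {r : ℝ | ∃ lam x, σ.IsEigenpair T p lam x ∧ r = |lam|}

/-- The homogeneity matrix `A(σ,p) = diag(p₁'-1,…,p_d'-1)(ν 1ᵀ - I)`. -/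
noncomputable def Amat (σ : ShapePartition m d N) (p : Fin d → ℝ) :
    Matrix (Fin d) (Fin d) ℝ :=
  Matrix.of fun i j => (p i / (p i - 1) - 1) * ((σ.ν i : ℝ) - if i = j then 1 else 0)

/-- The multi-homogeneous map `F^{(σ,p)}`. -/
noncomputable def Fmap (σ : ShapePartition m d N) (T : (∀ k, Fin (N k)) → ℝ)
    (p : Fin d → ℝ) (x : ∀ i, Fin (σ.n i) → ℝ) : ∀ i, Fin (σ.n i) → ℝ :=
  fun i j => (tmap T (σ.rep i) j (σ.blowup x)) ^ (p i / (p i - 1) - 1)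

/-- The map `G^{(σ,p)}_{i,j}(x) = sqrt(x_{i,j} F^{(σ,p)}_{i,j}(x))`. -/
noncomputable def Gmap (σ : ShapePartition m d N) (T : (∀ k, Fin (N k)) → ℝ)
    (p : Fin d → ℝ) (x : ∀ i, Fin (σ.n i) → ℝ) : ∀ i, Fin (σ.n i) → ℝ :=
  fun i j => Real.sqrt (x i j * σ.Fmap T p x i j)

/-- The upper Collatz–Wielandt function `čw`. -/
noncomputable def cwMax (σ : ShapePartition m d N) (b : Fin d → ℝ) (γ : ℝ)
    (H x : ∀ i, Fin (σ.n i) → ℝ) : ℝ :=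
  ∏ i, (⨆ j : Fin (σ.n i), H i j / x i j) ^ ((γ - 1) * b i)

/-- The lower Collatz–Wielandt function `ĉw`. -/
noncomputable def cwMin (σ : ShapePartition m d N) (b : Fin d → ℝ) (γ : ℝ)
    (H x : ∀ i, Fin (σ.n i) → ℝ) : ℝ :=
  ∏ i, (⨅ j ∈ {j : Fin (σ.n i) | 0 < x i j}, H i j / x i j) ^ ((γ - 1) * b i)

/-- The weighted Hilbert metric `μ_b`. -/
noncomputable def muB (σ : ShapePartition m d N) (b : Fin d → ℝ)
    (x y : ∀ i, Fin (σ.n i) → ℝ) : ℝ :=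
  ∑ i, b i * hilbertDist (x i) (y i)

/-- The Rayleigh quotient `Φ`. -/
noncomputable def rayleigh (σ : ShapePartition m d N) (T : (∀ k, Fin (N k)) → ℝ)
    (p : Fin d → ℝ) (x : ∀ i, Fin (σ.n i) → ℝ) : ℝ :=
  mform T (σ.blowup x) / ∏ i, pnorm (p i) (x i) ^ (σ.ν i)

/-- The tensor norm `‖T‖_{(σ,p)}`. -/
noncomputable def tnorm (σ : ShapePartition m d N) (T : (∀ k, Fin (N k)) → ℝ)
    (p : Fin d → ℝ) : ℝ :=
  sSup {r : ℝ | ∃ x : ∀ i, Fin (σ.n i) → ℝ, (∀ i, x i ≠ 0) ∧ r = |σ.rayleigh T p x|}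

end ShapePartition

/-!
For `T ≥ 0` every entry of `M` is nonnegative, so a row of `M` has a nonzero entry iff its row sum
is nonzero. The row sum is the derivative of `x ↦ 𝒯_{s_i,t}(x^[σ])` at `𝟙` in the direction `𝟙`,
which equals `(m - 1) 𝒯_{s_i,t}(𝟙)` since every monomial of `𝒯_{s_i,t}` has degree `m - 1`:
it depends on the row only through the position `s_i` and the index `t`. If `σ ⊑ σ̃`, the least
element of a block of `σ̃` is the least element of the block of `σ` containing it, so every row of
the matrix of `σ̃` has the same row sum as a row of the matrix of `σ`.
-/

open Finset

section ProdCoord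

variable {α : Type*} [Fintype α] {κ : α → Type*} [∀ a, Fintype (κ a)] {ι : Type*}
  [DecidableEq ι]

theorem hasFDerivAt_prod_coord (s : Finset ι) (c : ι → Σ a, κ a) (x : ∀ a, κ a → ℝ) :
    HasFDerivAt (fun x : ∀ a, κ a → ℝ => ∏ l ∈ s, x (c l).1 (c l).2)
      (∑ l ∈ s, (∏ l' ∈ s.erase l, x (c l').1 (c l').2) •
        (ContinuousLinearMap.proj (R := ℝ) (φ := fun _ : κ (c l).1 => ℝ) (c l).2 ∘L
          ContinuousLinearMap.proj (φ := fun a => κ a → ℝ) (c l).1)) x :=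
  HasFDerivAt.finsetProd fun l _ =>
    (ContinuousLinearMap.proj (R := ℝ) (φ := fun _ : κ (c l).1 => ℝ) (c l).2 ∘L
      ContinuousLinearMap.proj (φ := fun a => κ a → ℝ) (c l).1).hasFDerivAt

theorem fderiv_prod_coord_apply_single [DecidableEq α] [∀ a, DecidableEq (κ a)] (s : Finset ι)
    (c : ι → Σ a, κ a) (b : Σ a, κ a) :
    fderiv ℝ (fun x : ∀ a, κ a → ℝ => ∏ l ∈ s, x (c l).1 (c l).2) (fun _ _ => 1)
      (Pi.single b.1 (Pi.single b.2 1)) = #{l ∈ s | c l = b} := by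
  rw [(hasFDerivAt_prod_coord s c _).fderiv]
  simp only [_root_.sum_apply, ContinuousLinearMap.comp_apply, ContinuousLinearMap.proj_apply,
    prod_const_one, one_smul]
  rw [card_filter, Nat.cast_sum]
  refine sum_congr rfl fun l _ => ?_
  obtain ⟨a, t⟩ := c l
  obtain ⟨a', t'⟩ := b
  by_cases ha : a = a'
  · subst ha
    simp [Pi.single_apply]
  · simp [ha]

theorem fderiv_sum_mul_prod_coord_apply_single [DecidableEq α] [∀ a, DecidableEq (κ a)]
    {β : Type*} [Fintype β] (w : β → ℝ) (s : Finset ι) (c : β → ι → Σ a, κ a) (b : Σ a, κ a) :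
    fderiv ℝ (fun x : ∀ a, κ a → ℝ => ∑ J, w J * ∏ l ∈ s, x (c J l).1 (c J l).2)
      (fun _ _ => 1) (Pi.single b.1 (Pi.single b.2 1)) = ∑ J, w J * #{l ∈ s | c J l = b} := by
  have hprod (J : β) := (hasFDerivAt_prod_coord s (c J) (fun _ _ => 1)).differentiableAt
  rw [fderiv_fun_sum fun J _ => (hprod J).const_mul (w J), _root_.sum_apply]
  refine sum_congr rfl fun J _ => ?_
  rw [fderiv_const_mul (hprod J), smul_apply, smul_eq_mul, fderiv_prod_coord_apply_single]

end ProdCoord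

namespace ShapePartition

variable {m d : ℕ} {N : Fin m → ℕ} (σ : ShapePartition m d N) (T : (∀ k, Fin (N k)) → ℝ)

def blowupCoord (J : ∀ k, Fin (N k)) (l : Fin m) : Σ i, Fin (σ.n i) :=
  ⟨σ.β l, Fin.cast (σ.dim_n l) (J l)⟩

theorem tmap_blowup (k : Fin m) (t : Fin (N k)) (x : ∀ i, Fin (σ.n i) → ℝ) :
    tmap T k t (σ.blowup x) = ∑ J, (if J k = t then T J else 0) *
      ∏ l ∈ univ.erase k, x (σ.blowupCoord J l).1 (σ.blowupCoord J l).2 := by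
  refine sum_congr rfl fun J _ => ?_
  split_ifs <;> simp only [blowup, blowupCoord, zero_mul]

theorem Mmat_eq_sum (i : Fin d) (t : Fin (N (σ.rep i))) (b : Σ i, Fin (σ.n i)) :
    σ.Mmat T ⟨i, t⟩ b = ∑ J, (if J (σ.rep i) = t then T J else 0) *
      #{l ∈ univ.erase (σ.rep i) | σ.blowupCoord J l = b} := by
  rw [Mmat, funext (σ.tmap_blowup T (σ.rep i) t)]
  exact fderiv_sum_mul_prod_coord_apply_single _ _ σ.blowupCoord b

variable {T} in
theorem Mmat_nonneg (hT : ∀ J, 0 ≤ T J) (a b : Σ i, Fin (σ.n i)) : 0 ≤ σ.Mmat T a b := by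
  rw [σ.Mmat_eq_sum T a.1 a.2]
  refine sum_nonneg fun J _ => mul_nonneg ?_ (Nat.cast_nonneg _)
  split_ifs
  exacts [hT J, le_rfl]

theorem sum_Mmat (i : Fin d) (t : Fin (N (σ.rep i))) :
    ∑ b, σ.Mmat T ⟨i, t⟩ b = (m - 1 : ℕ) * tmap T (σ.rep i) t (fun _ _ => 1) := by
  have hfiber (J : ∀ k, Fin (N k)) :
      ∑ b, (#{l ∈ univ.erase (σ.rep i) | σ.blowupCoord J l = b} : ℝ) = (m - 1 : ℕ) := by
    rw [← Nat.cast_sum, ← card_eq_sum_card_fiberwise fun _ _ => mem_coe.2 (mem_univ _),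
      card_erase_of_mem (mem_univ _), card_univ, Fintype.card_fin]
  simp only [σ.Mmat_eq_sum T i t]
  rw [sum_comm]
  simp only [← mul_sum, hfiber, tmap, prod_const_one, mul_one]
  rw [mul_sum]
  refine sum_congr rfl fun J _ => ?_
  split_ifs <;> ring

variable {T} in
theorem strictlyNonneg_iff (hT : ∀ J, 0 ≤ T J) :
    σ.StrictlyNonneg T ↔
      ∀ k ∈ Set.range σ.rep, ∀ t : Fin (N k),
        ((m - 1 : ℕ) : ℝ) * tmap T k t (fun _ _ => 1) ≠ 0 := by
  have hrow (a : Σ i, Fin (σ.n i)) : (∃ b, σ.Mmat T a b ≠ 0) ↔ ∑ b, σ.Mmat T a b ≠ 0 := by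
    simp [sum_eq_zero_iff_of_nonneg fun b _ => σ.Mmat_nonneg hT a b]
  constructor
  · rintro h _ ⟨i, rfl⟩ t
    exact σ.sum_Mmat T i t ▸ (hrow _).1 (h ⟨i, t⟩)
  · rintro h ⟨i, t⟩
    exact (hrow _).2 (σ.sum_Mmat T i t ▸ h _ ⟨i, rfl⟩ t)

theorem range_rep_subset_of_refines {d' : ℕ} (σ' : ShapePartition m d' N) (π : Fin d → Fin d')
    (hπ : ∀ j, π (σ.β j) = σ'.β j) : Set.range σ'.rep ⊆ Set.range σ.rep := by
  rintro _ ⟨i', rfl⟩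
  refine ⟨σ.β (σ'.rep i'), le_antisymm (σ.rep_min _ _ rfl) (σ'.rep_min i' _ ?_)⟩
  rw [← hπ, σ.rep_mem, hπ, σ'.rep_mem]

end ShapePartition

theorem strictlyNonneg_of_refines_general
    {m d d' : ℕ} {N : Fin m → ℕ}
    (T : (∀ k, Fin (N k)) → ℝ) (hT : ∀ J, 0 ≤ T J)
    (σ : ShapePartition m d N) (σ' : ShapePartition m d' N)
    (π : Fin d → Fin d') (hπ : ∀ j : Fin m, π (σ.β j) = σ'.β j)
    (h : σ.StrictlyNonneg T) : σ'.StrictlyNonneg T := by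
  rw [σ.strictlyNonneg_iff hT] at h
  rw [σ'.strictlyNonneg_iff hT]
  exact fun k hk => h k (σ.range_rep_subset_of_refines σ' π hπ hk)

/-- If `σ ⊑ σ̃` and `T` is σ-strictly nonnegative, then `T` is
σ̃-strictly nonnegative. -/
theorem strictlyNonneg_of_refines
    {m d d' : ℕ} (hm : 0 < m) {N : Fin m → ℕ} (hN : ∀ k, 0 < N k)
    (T : (∀ k, Fin (N k)) → ℝ) (hT : ∀ J, 0 ≤ T J)
    (σ : ShapePartition m d N) (σ' : ShapePartition m d' N)
    (hd : d' ≤ d) (π : Fin d → Fin d') (hπ : ∀ j : Fin m, π (σ.β j) = σ'.β j)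
    (h : σ.StrictlyNonneg T) : σ'.StrictlyNonneg T :=
  strictlyNonneg_of_refines_general T hT σ σ' π hπ h

end TensorPF
end

section
/- Let T be a nonnegative tensor and let σ, σ̃ be shape partitions of T with σ ⊑ σ̃. If T is σ-weakly irreducible and T is σ̃-symmetric, then T is σ̃-weakly irreducible. -/
open scoped BigOperators

/-! An entry `M_{(i,t),b}` is positive iff some positive entry `T_J` has `J (s_i) = t` and a
second position `l ≠ s_i` whose coordinate `J l` lands at the node `b`. For a `σ̃`-symmetric
tensor the distinguished position `s_i` may be replaced by any position of its block, so the
surjection `I^σ → I^σ̃` induced by `σ ⊑ σ̃` maps edges of the graph of `M^σ` to edges of the graph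
of `M^σ̃`, and strong connectivity transfers. -/

theorem Pi.single_single_apply_sigma {ι : Type*} [DecidableEq ι] {α : ι → Type*}
    [∀ i, DecidableEq (α i)] {R : Type*} [Zero R] (b c : Σ i, α i) (r : R) :
    (Pi.single b.1 (Pi.single b.2 r) : ∀ i, α i → R) c.1 c.2 = if c = b then r else 0 := by
  obtain ⟨i, s⟩ := b
  obtain ⟨j, t⟩ := c
  by_cases hji : j = i
  · subst hji
    simp [Pi.single_apply]
  · simp [hji]

theorem hasFDerivAt_prod_clm_of_eq_one {E ι : Type*} [NormedAddCommGroup E]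
    [NormedSpace ℝ E] [DecidableEq ι] (s : Finset ι) (L : ι → E →L[ℝ] ℝ) {x : E}
    (hx : ∀ i ∈ s, L i x = 1) :
    HasFDerivAt (fun y => ∏ i ∈ s, L i y) (∑ i ∈ s, L i) x := by
  have h := HasFDerivAt.finsetProd (u := s) (fun i _ => (L i).hasFDerivAt (x := x))
  refine h.congr_fderiv (Finset.sum_congr rfl fun i _ => ?_)
  rw [Finset.prod_eq_one fun j hj => hx j (Finset.mem_of_mem_erase hj), one_smul]

namespace TensorPF

open Finset

namespace ShapePartition

variable {m d : ℕ} {N : Fin m → ℕ} (σ : ShapePartition m d N)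

def node (l : Fin m) (j : Fin (N l)) : Σ i, Fin (σ.n i) :=
  ⟨σ.β l, Fin.cast (σ.dim_n l) j⟩

theorem node_rep (a : Σ i, Fin (σ.n i)) : σ.node (σ.rep a.1) a.2 = a := by
  obtain ⟨i, t⟩ := a
  refine Sigma.ext (σ.rep_mem i) ((Fin.heq_ext_iff (congrArg σ.n (σ.rep_mem i))).mpr ?_)
  rfl

theorem node_eq_node {k l : Fin m} (hkl : σ.β k = σ.β l) {j : Fin (N k)} {j' : Fin (N l)}
    (hj : (j : ℕ) = j') : σ.node k j = σ.node l j' :=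
  Sigma.ext hkl ((Fin.heq_ext_iff (congrArg σ.n hkl)).mpr (by simpa [node] using hj))

def evalCLM (a : Σ i, Fin (σ.n i)) : (∀ i, Fin (σ.n i) → ℝ) →L[ℝ] ℝ :=
  (ContinuousLinearMap.proj a.2).comp
    (ContinuousLinearMap.proj a.1 : (∀ i, Fin (σ.n i) → ℝ) →L[ℝ] Fin (σ.n a.1) → ℝ)

theorem evalCLM_apply (a : Σ i, Fin (σ.n i)) (x : ∀ i, Fin (σ.n i) → ℝ) :
    σ.evalCLM a x = x a.1 a.2 := rfl

theorem hasFDerivAt_tmap_blowup (T : (∀ k, Fin (N k)) → ℝ) (s : Fin m) (t : Fin (N s)) :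
    HasFDerivAt (fun x => tmap T s t (σ.blowup x))
      (∑ J : ∀ l, Fin (N l), if J s = t then
        T J • ∑ l ∈ univ.erase s, σ.evalCLM (σ.node l (J l)) else 0)
      (fun _ _ => 1) := by
  show HasFDerivAt (fun x => ∑ J : ∀ l, Fin (N l), if J s = t then
    T J * ∏ l ∈ univ.erase s, σ.evalCLM (σ.node l (J l)) x else 0) _ _
  refine HasFDerivAt.fun_sum fun J _ => ?_
  by_cases hJ : J s = t
  · simp only [hJ, if_true]
    exact (hasFDerivAt_prod_clm_of_eq_one _ _ fun _ _ => rfl).const_mul (T J)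
  · simp only [hJ, if_false]
    exact hasFDerivAt_const 0 _

open Classical in
theorem Mmat_apply (T : (∀ k, Fin (N k)) → ℝ) (a b : Σ i, Fin (σ.n i)) :
    σ.Mmat T a b = ∑ J : ∀ l, Fin (N l), if J (σ.rep a.1) = a.2 then
      T J * #{l ∈ univ.erase (σ.rep a.1) | σ.node l (J l) = b} else 0 := by
  rw [Mmat, (σ.hasFDerivAt_tmap_blowup T (σ.rep a.1) a.2).fderiv, _root_.sum_apply]
  refine Finset.sum_congr rfl fun J _ => ?_
  split_ifs
  · simp only [smul_apply, _root_.sum_apply, evalCLM_apply,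
      Pi.single_single_apply_sigma, sum_boole, smul_eq_mul]
  · rfl

theorem Mmat_pos_iff {T : (∀ k, Fin (N k)) → ℝ} (hT : ∀ J, 0 ≤ T J) (a b : Σ i, Fin (σ.n i)) :
    0 < σ.Mmat T a b ↔ ∃ (J : ∀ l, Fin (N l)) (l : Fin m),
      0 < T J ∧ J (σ.rep a.1) = a.2 ∧ l ≠ σ.rep a.1 ∧ σ.node l (J l) = b := by
  classical
  rw [Mmat_apply, sum_pos_iff_of_nonneg fun J _ => by split_ifs <;> positivity [hT J]]
  refine exists_congr fun J => ?_
  split_ifs with hJ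
  · simp [mul_pos_iff, (hT J).not_gt, iff_true_intro hJ, card_pos, filter_nonempty_iff]
  · simp [hJ]

theorem Mmat_node_pos_of_partSymmetric {T : (∀ k, Fin (N k)) → ℝ} (hT : ∀ J, 0 ≤ T J)
    (hsym : σ.PartSymmetric T) {J : ∀ l, Fin (N l)} (hJ : 0 < T J) {k l : Fin m}
    (hkl : k ≠ l) : 0 < σ.Mmat T (σ.node k (J k)) (σ.node l (J l)) := by
  -- Swapping `k` with the representative of its block moves the row coordinate to `σ.rep`,
  -- where `Mmat` reads it; symmetry keeps the entry of `T`.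
  set r := σ.rep (σ.β k)
  let τ := Equiv.swap r k
  have hτ : ∀ x, σ.β (τ x) = σ.β x := by
    have hr : σ.β r = σ.β k := σ.rep_mem _
    intro x
    rw [Equiv.swap_apply_def]
    split_ifs <;> simp_all
  rw [Mmat_pos_iff σ hT]
  refine ⟨fun x => Fin.cast (σ.dim_eq (τ x) x (hτ x)) (J (τ x)), τ l, ?_, ?_, ?_, ?_⟩
  · rwa [hsym τ hτ J]
  · exact Fin.ext (congrArg (fun x => (J x : ℕ)) (Equiv.swap_apply_left r k))
  · simpa [τ, Equiv.swap_apply_eq_iff, node, r] using hkl.symm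
  · exact σ.node_eq_node (hτ l) (congrArg (fun x => (J x : ℕ)) (Equiv.swap_apply_self r k l))

variable {σ} in
theorem WeaklyIrreducible.of_surjective {d' : ℕ} {σ' : ShapePartition m d' N}
    {T T' : (∀ k, Fin (N k)) → ℝ} (h : σ.WeaklyIrreducible T)
    (f : (Σ i, Fin (σ.n i)) → Σ i, Fin (σ'.n i)) (hf : Function.Surjective f)
    (hedge : ∀ a b, 0 < σ.Mmat T a b → 0 < σ'.Mmat T' (f a) (f b)) :
    σ'.WeaklyIrreducible T' := by
  intro a' b'
  obtain ⟨a, rfl⟩ := hf a'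
  obtain ⟨b, rfl⟩ := hf b'
  exact Relation.TransGen.lift (p := fun a b => 0 < σ'.Mmat T' a b) f hedge _ _ (h a b)

end ShapePartition

theorem weaklyIrreducible_of_refines_general
    {m d d' : ℕ} {N : Fin m → ℕ}
    (T : (∀ k, Fin (N k)) → ℝ) (hT : ∀ J, 0 ≤ T J)
    (σ : ShapePartition m d N) (σ' : ShapePartition m d' N)
    (π : Fin d → Fin d') (hπ : ∀ j : Fin m, π (σ.β j) = σ'.β j)
    (hsym : σ'.PartSymmetric T)
    (h : σ.WeaklyIrreducible T) : σ'.WeaklyIrreducible T := by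
  have hβ : ∀ k, σ'.β (σ.rep (σ.β k)) = σ'.β k := fun k => by rw [← hπ, ← hπ, σ.rep_mem]
  let f : (Σ i, Fin (σ.n i)) → Σ i, Fin (σ'.n i) := fun a => σ'.node (σ.rep a.1) a.2
  have hf : ∀ l j, f (σ.node l j) = σ'.node l j := fun l _ => σ'.node_eq_node (hβ l) rfl
  have hf_surj : Function.Surjective f :=
    fun c => ⟨σ.node (σ'.rep c.1) c.2, (hf _ _).trans (σ'.node_rep c)⟩
  refine h.of_surjective f hf_surj fun a b hab => ?_
  obtain ⟨J, l, hJ, hJa, hl, rfl⟩ := (σ.Mmat_pos_iff hT a b).1 hab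
  have hfa : f a = σ'.node (σ.rep a.1) (J (σ.rep a.1)) := congrArg (σ'.node _) hJa.symm
  rw [hfa, hf]
  exact σ'.Mmat_node_pos_of_partSymmetric hT hsym hJ hl.symm

/-- If `σ ⊑ σ̃`, `T` is σ-weakly irreducible and σ̃-symmetric,
then `T` is σ̃-weakly irreducible. -/
theorem weaklyIrreducible_of_refines
    {m d d' : ℕ} (hm : 0 < m) {N : Fin m → ℕ} (hN : ∀ k, 0 < N k)
    (T : (∀ k, Fin (N k)) → ℝ) (hT : ∀ J, 0 ≤ T J)
    (σ : ShapePartition m d N) (σ' : ShapePartition m d' N)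
    (hd : d' ≤ d) (π : Fin d → Fin d') (hπ : ∀ j : Fin m, π (σ.β j) = σ'.β j)
    (hsym : σ'.PartSymmetric T)
    (h : σ.WeaklyIrreducible T) : σ'.WeaklyIrreducible T :=
  weaklyIrreducible_of_refines_general T hT σ σ' π hπ hsym h

end TensorPF
end

section
/- Let T be a nonnegative tensor and let σ, σ̃ be shape partitions of T with σ ⊑ σ̃. If T is σ-strongly irreducible and T is σ̃-symmetric, then T is σ̃-strongly irreducible. -/
open scoped BigOperators

namespace TensorPF

/-!
Given `x` on the blocks of `σ'`, copy `x (π i)` onto block `i` of `σ`. This tuple `y` has the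
same blow-up `y^[σ] = x^[σ']`, and it is nonnegative, nonzero on each block and not positive
whenever `x` is (`π` is onto). So σ-strong irreducibility gives a zero entry `y_{k,l}` with
`𝒯_{s_k,l}(x^[σ']) > 0`. The entry is `x_{π k,l}`, and σ'-symmetry lets us move the position
`s_k` to the representative `s'_{π k}` of its σ'-block without changing `𝒯`.
-/

theorem fin_family_congr {α β : Type*} {n : α → ℕ} (f : ∀ a, Fin (n a) → β)
    {a b : α} (h : a = b) {u : Fin (n a)} {v : Fin (n b)} (hv : (u : ℕ) = v) :
    f a u = f b v := by
  subst h
  rw [Fin.ext hv]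

namespace ShapePartition

variable {m d : ℕ} {N : Fin m → ℕ} (σ : ShapePartition m d N)

def permuteIndex (e : Equiv.Perm (Fin m)) (he : ∀ k, σ.β (e k) = σ.β k)
    (J : ∀ k, Fin (N k)) : ∀ k, Fin (N k) :=
  fun k => Fin.cast (σ.dim_eq (e k) k (he k)) (J (e k))

theorem blowup_permuteIndex (x : ∀ i, Fin (σ.n i) → ℝ) (e : Equiv.Perm (Fin m))
    (he : ∀ k, σ.β (e k) = σ.β k) (J : ∀ k, Fin (N k)) (l : Fin m) :
    σ.blowup x l (σ.permuteIndex e he J l) = σ.blowup x (e l) (J (e l)) :=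
  fin_family_congr x (he l).symm (by simp [permuteIndex])

theorem swap_preserves_β {k k' : Fin m} (hb : σ.β k = σ.β k') (l : Fin m) :
    σ.β (Equiv.swap k k' l) = σ.β l := by
  rcases eq_or_ne l k with rfl | hk
  · rw [Equiv.swap_apply_left, hb]
  rcases eq_or_ne l k' with rfl | hk'
  · rw [Equiv.swap_apply_right, hb]
  · rw [Equiv.swap_apply_of_ne_of_ne hk hk']

theorem permuteIndex_swap_involutive {k k' : Fin m} (hb : σ.β k = σ.β k') :
    Function.Involutive (σ.permuteIndex (Equiv.swap k k') (σ.swap_preserves_β hb)) := by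
  intro J
  funext l
  ext
  simp only [permuteIndex, Fin.val_cast]
  rw [Equiv.swap_apply_self]

variable {σ} in
/-- Swapping `k` and `k'` in every multi-index matches the two defining sums term by term. -/
theorem PartSymmetric.tmap_blowup_eq {T : (∀ k, Fin (N k)) → ℝ} (hsym : σ.PartSymmetric T)
    (x : ∀ i, Fin (σ.n i) → ℝ) {k k' : Fin m} (hb : σ.β k = σ.β k') (j : Fin (N k)) :
    tmap T k j (σ.blowup x) = tmap T k' (Fin.cast (σ.dim_eq k k' hb) j) (σ.blowup x) := by
  set e := Equiv.swap k k'
  set Φ := σ.permuteIndex e (σ.swap_preserves_β hb)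
  have hΦ := σ.permuteIndex_swap_involutive hb
  have hT : ∀ J, T (Φ J) = T J := hsym e (σ.swap_preserves_β hb)
  have hcond : ∀ J, Φ J k = j ↔ J k' = Fin.cast (σ.dim_eq k k' hb) j := fun J => by
    simp only [Φ, permuteIndex, e, Fin.ext_iff, Fin.val_cast]
    rw [Equiv.swap_apply_left]
  have hprod : ∀ J, ∏ l ∈ Finset.univ.erase k, σ.blowup x l (Φ J l)
      = ∏ l ∈ Finset.univ.erase k', σ.blowup x l (J l) := fun J =>
    Finset.prod_equiv e (by simp [e, Equiv.swap_apply_eq_iff])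
      (fun l _ => σ.blowup_permuteIndex x e _ J l)
  unfold tmap
  refine (Fintype.sum_equiv ⟨Φ, Φ, hΦ.leftInverse, hΦ.rightInverse⟩ _ _ fun J => ?_).symm
  simp only [Equiv.coe_fn_mk, hT, hprod, hcond]

section Refinement

variable {d' : ℕ} {σ} {σ' : ShapePartition m d' N} {π : Fin d → Fin d'}
  (hπ : ∀ j, π (σ.β j) = σ'.β j)
include hπ

theorem β_rep_eq_of_comp_eq (i : Fin d) : σ'.β (σ.rep i) = σ'.β (σ'.rep (π i)) := by
  rw [σ'.rep_mem, ← hπ, σ.rep_mem]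

theorem n_eq_of_comp_eq (i : Fin d) : σ.n i = σ'.n (π i) :=
  σ'.dim_eq _ _ (β_rep_eq_of_comp_eq hπ i)

theorem surjective_of_comp_eq : Function.Surjective π := fun i' => by
  obtain ⟨k, rfl⟩ := σ'.surj i'
  exact ⟨σ.β k, hπ k⟩

def pullback (x : ∀ i, Fin (σ'.n i) → ℝ) : ∀ i, Fin (σ.n i) → ℝ :=
  fun i t => x (π i) (Fin.cast (n_eq_of_comp_eq hπ i) t)

theorem blowup_pullback (x : ∀ i, Fin (σ'.n i) → ℝ) :
    σ.blowup (pullback hπ x) = σ'.blowup x := by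
  funext k t
  exact fin_family_congr x (hπ k) (by simp)

theorem pullback_ne_zero {x : ∀ i, Fin (σ'.n i) → ℝ} {i : Fin d} (hx : x (π i) ≠ 0) :
    pullback hπ x i ≠ 0 := fun h0 =>
  hx <| funext fun t => by
    simpa [pullback] using congrFun h0 (Fin.cast (n_eq_of_comp_eq hπ i).symm t)

theorem pos_of_pullback_pos {x : ∀ i, Fin (σ'.n i) → ℝ} (hx : ∀ i j, 0 < pullback hπ x i j)
    (i' : Fin d') (j : Fin (σ'.n i')) : 0 < x i' j := by
  obtain ⟨i, rfl⟩ := surjective_of_comp_eq hπ i'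
  simpa [pullback] using hx i (Fin.cast (n_eq_of_comp_eq hπ i).symm j)

end Refinement

end ShapePartition

theorem stronglyIrreducible_of_refines_general
    {m d d' : ℕ} {N : Fin m → ℕ}
    (T : (∀ k, Fin (N k)) → ℝ)
    (σ : ShapePartition m d N) (σ' : ShapePartition m d' N)
    (π : Fin d → Fin d') (hπ : ∀ j : Fin m, π (σ.β j) = σ'.β j)
    (hsym : σ'.PartSymmetric T)
    (h : σ.StronglyIrreducible T) : σ'.StronglyIrreducible T := by
  intro x hx hx0 hxpos
  obtain ⟨k, l, hl0, hl⟩ := h (ShapePartition.pullback hπ x) (fun i j => hx _ _)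
    (fun i => ShapePartition.pullback_ne_zero hπ (hx0 (π i)))
    (fun hpos => hxpos (ShapePartition.pos_of_pullback_pos hπ hpos))
  refine ⟨π k, Fin.cast (ShapePartition.n_eq_of_comp_eq hπ k) l, hl0, ?_⟩
  rw [ShapePartition.blowup_pullback] at hl
  exact hl.trans_eq (hsym.tmap_blowup_eq x (ShapePartition.β_rep_eq_of_comp_eq hπ k) l)

/-- If `σ ⊑ σ̃`, `T` is σ-strongly irreducible and σ̃-symmetric,
then `T` is σ̃-strongly irreducible. -/
theorem stronglyIrreducible_of_refines
    {m d d' : ℕ} (hm : 0 < m) {N : Fin m → ℕ} (hN : ∀ k, 0 < N k)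
    (T : (∀ k, Fin (N k)) → ℝ) (hT : ∀ J, 0 ≤ T J)
    (σ : ShapePartition m d N) (σ' : ShapePartition m d' N)
    (hd : d' ≤ d) (π : Fin d → Fin d') (hπ : ∀ j : Fin m, π (σ.β j) = σ'.β j)
    (hsym : σ'.PartSymmetric T)
    (h : σ.StronglyIrreducible T) : σ'.StronglyIrreducible T :=
  stronglyIrreducible_of_refines_general T σ σ' π hπ hsym h

end TensorPF
end

section
/- Let T ∈ ℝ^{N_1×⋯×N_m} be a tensor, σ = {σ_1,…,σ_d} a shape partition of T, and p ∈ (1,∞)^d. If T is σ-symmetric, then every (σ,p)-eigenvector of T is a critical point of the Rayleigh quotient Φ (the gradient of Φ vanishes there), with critical value equal to the corresponding (σ,p)-eigenvalue; moreover ‖T‖_{(σ,p)} = r^{(σ,p)}(T). -/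
open scoped BigOperators

namespace TensorPF

/-!
At a point `x` with `‖x_i‖_{p_i} = 1` the `(i, j)` component of `∇Φ(x)` is
`ν_i (𝒯_{s_i,j}(x^[σ]) - f_T(x^[σ]) ψ_{p_i}(x_i)_j)`: σ-symmetry makes the `ν_i` partial
derivatives of `f_T` along the positions of block `i` coincide with `𝒯_{s_i,j}`. By Euler's identity
the eigenvalue of an eigenvector `x` is `f_T(x^[σ])`, so the normalised eigenvectors are exactly the
normalised critical points of `Φ`. Since `Φ` is invariant under positive rescaling of each block,
`|Φ|` attains its supremum on the compact product of unit spheres; a maximiser is a critical point,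
hence an eigenvector whose eigenvalue has modulus `‖T‖_{(σ,p)}`.
-/

theorem HasFDerivAt.div_of_apply_eq_one {E : Type*} [NormedAddCommGroup E] [NormedSpace ℝ E]
    {f g : E → ℝ} {f' g' : E →L[ℝ] ℝ} {x : E} (hf : HasFDerivAt f f' x)
    (hg : HasFDerivAt g g' x) (hgx : g x = 1) :
    HasFDerivAt (fun y => f y / g y) (f' - f x • g') x := by
  have hinv := (hasDerivAt_inv (by rw [hgx]; exact one_ne_zero)).comp_hasFDerivAt x hg
  refine (hf.mul hinv).congr_fderiv ?_
  simp [hgx, sub_eq_neg_add]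

theorem IsLocalMax.fderiv_eq_zero_of_abs {E : Type*} [NormedAddCommGroup E] [NormedSpace ℝ E]
    {f : E → ℝ} {a : E} (h : IsLocalMax (fun x => |f x|) a) : fderiv ℝ f a = 0 := by
  rcases le_or_gt 0 (f a) with ha | ha
  · refine IsLocalMax.fderiv_eq_zero (h.mono fun y hy => ?_)
    exact (le_abs_self _).trans (hy.trans (abs_of_nonneg ha).le)
  · refine IsLocalMin.fderiv_eq_zero (h.mono fun y hy => ?_)
    have : f a = -|f a| := by rw [abs_of_neg ha, neg_neg]
    linarith [neg_abs_le (f y)]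

section pnorm

variable {n : ℕ} {q : ℝ}

theorem pnorm_eq_norm_toLp (hq : 0 < q) (v : Fin n → ℝ) :
    pnorm q v = ‖WithLp.toLp (ENNReal.ofReal q) v‖ := by
  rw [PiLp.norm_eq_sum (by rwa [ENNReal.toReal_ofReal hq.le])]
  simp [pnorm, ENNReal.toReal_ofReal hq.le]

theorem pnorm_smul (hq : 1 ≤ q) (c : ℝ) (v : Fin n → ℝ) :
    pnorm q (c • v) = |c| * pnorm q v := by
  have : Fact (1 ≤ ENNReal.ofReal q) := ⟨by simpa using hq⟩
  rw [pnorm_eq_norm_toLp (by linarith), pnorm_eq_norm_toLp (by linarith), WithLp.toLp_smul,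
    norm_smul, Real.norm_eq_abs]

theorem pnorm_eq_zero_iff (hq : 1 ≤ q) {v : Fin n → ℝ} : pnorm q v = 0 ↔ v = 0 := by
  have : Fact (1 ≤ ENNReal.ofReal q) := ⟨by simpa using hq⟩
  rw [pnorm_eq_norm_toLp (by linarith), norm_eq_zero, WithLp.toLp_eq_zero]

theorem pnorm_pos (hq : 1 ≤ q) {v : Fin n → ℝ} (hv : v ≠ 0) : 0 < pnorm q v := by
  have : Fact (1 ≤ ENNReal.ofReal q) := ⟨by simpa using hq⟩
  rw [pnorm_eq_norm_toLp (by linarith), norm_pos_iff, Ne, WithLp.toLp_eq_zero]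
  exact hv

theorem ne_zero_of_pnorm_eq_one (hq : 1 ≤ q) {v : Fin n → ℝ} (hv : pnorm q v = 1) : v ≠ 0 :=
  fun h => zero_ne_one (((pnorm_eq_zero_iff hq).mpr h).symm.trans hv)

theorem isCompact_pnorm_sphere (hq : 1 ≤ q) : IsCompact {v : Fin n → ℝ | pnorm q v = 1} := by
  have : Fact (1 ≤ ENNReal.ofReal q) := ⟨by simpa using hq⟩
  have h := (isCompact_sphere (0 : PiLp (ENNReal.ofReal q) (fun _ : Fin n => ℝ)) 1).image
    (PiLp.continuous_ofLp _ _)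
  convert h using 1
  ext v
  simp only [pnorm_eq_norm_toLp (by linarith : 0 < q), Set.mem_image,
    mem_sphere_zero_iff_norm]
  exact ⟨fun h => ⟨_, h, rfl⟩, by rintro ⟨x, hx, rfl⟩; exact hx⟩

theorem sum_abs_rpow_eq_one (hq : q ≠ 0) {v : Fin n → ℝ} (hv : pnorm q v = 1) :
    ∑ j, |v j| ^ q = 1 := by
  have h := congrArg (· ^ q) hv
  simp only [pnorm, Real.one_rpow] at h
  rwa [← Real.rpow_mul (Finset.sum_nonneg fun j _ => by positivity), one_div_mul_cancel hq,
    Real.rpow_one] at h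

theorem mul_psi_self (hq : q ≠ 0) (v : Fin n → ℝ) (j : Fin n) : v j * psi q v j = |v j| ^ q := by
  rcases eq_or_ne (v j) 0 with h | h
  · simp [psi, h, Real.zero_rpow hq]
  · rw [psi, mul_left_comm, ← sq, ← sq_abs, ← Real.rpow_two, ← Real.rpow_add (abs_pos.2 h),
      sub_add_cancel]

theorem hasFDerivAt_pnorm (hq : 1 < q) {v : Fin n → ℝ} (hv : v ≠ 0) :
    HasFDerivAt (pnorm q)
      ((∑ j, |v j| ^ q) ^ (1 / q - 1) •
        ∑ j, psi q v j • (ContinuousLinearMap.proj j : (Fin n → ℝ) →L[ℝ] ℝ)) v := by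
  have hsum : HasFDerivAt (fun w : Fin n → ℝ => ∑ j, |w j| ^ q)
      (∑ j, (q * |v j| ^ (q - 2) * v j) •
        (ContinuousLinearMap.proj j : (Fin n → ℝ) →L[ℝ] ℝ)) v :=
    HasFDerivAt.fun_sum fun j _ => by
      exact (hasDerivAt_abs_rpow (v j) hq).comp_hasFDerivAt v
        (ContinuousLinearMap.proj j : (Fin n → ℝ) →L[ℝ] ℝ).hasFDerivAt
  have hsum_ne : ∑ j, |v j| ^ q ≠ 0 := fun h =>
    hv ((pnorm_eq_zero_iff hq.le).mp (by rw [pnorm, h, Real.zero_rpow (by positivity)]))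
  refine ((Real.hasDerivAt_rpow_const (Or.inl hsum_ne)).comp_hasFDerivAt v hsum).congr_fderiv ?_
  ext w
  simp only [one_div, smul_apply, FunLike.coe_sum, Finset.sum_apply,
    FunLike.coe_smul, Pi.smul_apply, ContinuousLinearMap.proj_apply, smul_eq_mul, psi,
    Finset.mul_sum]
  refine Finset.sum_congr rfl fun j _ => ?_
  field_simp

end pnorm

section pairing

variable {ι : Type*} {κ : ι → Type*}

noncomputable def coordL (i : ι) (j : κ i) : (∀ i, κ i → ℝ) →L[ℝ] ℝ :=
  (ContinuousLinearMap.proj j).comp (ContinuousLinearMap.proj (R := ℝ) (φ := fun i => κ i → ℝ) i)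

@[simp]
theorem coordL_apply (i : ι) (j : κ i) (v : ∀ i, κ i → ℝ) : coordL i j v = v i j := rfl

variable [Fintype ι] [∀ i, Fintype (κ i)]

noncomputable def pairing (c : ∀ i, κ i → ℝ) : (∀ i, κ i → ℝ) →L[ℝ] ℝ :=
  ∑ i, ∑ j, c i j • coordL i j

@[simp]
theorem pairing_apply (c v : ∀ i, κ i → ℝ) : pairing c v = ∑ i, ∑ j, c i j * v i j := by
  simp [pairing]

theorem pairing_eq_zero_iff {c : ∀ i, κ i → ℝ} : pairing c = 0 ↔ c = 0 := by
  classical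
  refine ⟨fun h => funext fun i => funext fun j => ?_, fun h => by ext v; simp [h]⟩
  have := congrArg (· (Pi.single i (Pi.single j 1))) h
  simp only [pairing_apply] at this
  rw [Finset.sum_eq_single i (fun i' _ hi' => by simp [hi']) (by simp),
    Finset.sum_eq_single j (fun j' _ hj' => by simp [hj']) (by simp)] at this
  simpa using this

end pairing

theorem hasFDerivAt_mform {m : ℕ} {N : Fin m → ℕ} (T : (∀ k, Fin (N k)) → ℝ)
    (z : ∀ k, Fin (N k) → ℝ) :
    HasFDerivAt (mform T) (pairing fun k t => tmap T k t z) z := by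
  classical
  have hprod (J : ∀ k, Fin (N k)) : HasFDerivAt (fun w : ∀ k, Fin (N k) → ℝ => ∏ k, w k (J k))
      (∑ k, (∏ l ∈ Finset.univ.erase k, z l (J l)) • coordL k (J k)) z :=
    HasFDerivAt.finsetProd fun k _ => (coordL (κ := fun k => Fin (N k)) k (J k)).hasFDerivAt
  refine (HasFDerivAt.fun_sum fun J _ => (hprod J).const_mul (T J)).congr_fderiv ?_
  ext v
  simp only [FunLike.coe_sum, Finset.sum_apply, FunLike.coe_smul,
    Pi.smul_apply, coordL_apply, smul_eq_mul, pairing_apply, tmap, Finset.sum_mul, ite_mul,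
    zero_mul, Finset.mul_sum]
  rw [Finset.sum_comm]
  refine Finset.sum_congr rfl fun k _ => ?_
  rw [Finset.sum_comm]
  refine Finset.sum_congr rfl fun J _ => ?_
  rw [Finset.sum_ite_eq Finset.univ (J k)]
  simp [mul_assoc]

theorem sum_mul_tmap_eq_mform {m : ℕ} {N : Fin m → ℕ} (T : (∀ k, Fin (N k)) → ℝ) (k : Fin m)
    (z : ∀ k, Fin (N k) → ℝ) : ∑ t, z k t * tmap T k t z = mform T z := by
  simp only [tmap, Finset.mul_sum, mul_ite, mul_zero]
  rw [Finset.sum_comm]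
  refine Finset.sum_congr rfl fun J _ => ?_
  rw [Finset.sum_ite_eq Finset.univ (J k), if_pos (Finset.mem_univ _),
    ← Finset.mul_prod_erase Finset.univ _ (Finset.mem_univ k)]
  ring

theorem hasFDerivAt_prod_pnorm_pow {ι : Type*} [Fintype ι] {n : ι → ℕ} {q : ι → ℝ} (e : ι → ℕ)
    (hq : ∀ i, 1 < q i) {x : ∀ i, Fin (n i) → ℝ} (hx : ∀ i, pnorm (q i) (x i) = 1) :
    HasFDerivAt (fun y : ∀ i, Fin (n i) → ℝ => ∏ i, pnorm (q i) (y i) ^ e i)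
      (pairing fun i j => e i * psi (q i) (x i) j) x := by
  classical
  have hfactor (i : ι) :=
    ((hasFDerivAt_pnorm (hq i) (ne_zero_of_pnorm_eq_one (hq i).le (hx i))).comp x
    (ContinuousLinearMap.proj (R := ℝ) (φ := fun i => Fin (n i) → ℝ) i).hasFDerivAt).pow (e i)
  refine (HasFDerivAt.finsetProd fun i _ => hfactor i).congr_fderiv ?_
  ext v
  have hsum (i : ι) : ∑ j, |x i j| ^ q i = 1 := sum_abs_rpow_eq_one (by linarith [hq i]) (hx i)
  simp [hx, hsum, Finset.mul_sum, mul_assoc]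

namespace ShapePartition

variable {m d : ℕ} {N : Fin m → ℕ} (σ : ShapePartition m d N)

theorem sum_comp_β (F : Fin d → ℝ) : ∑ k, F (σ.β k) = ∑ i, σ.ν i * F i := by
  rw [Finset.sum_comp, Finset.image_univ_of_surjective σ.surj]
  simp [ν]

theorem prod_comp_β (F : Fin d → ℝ) : ∏ k, F (σ.β k) = ∏ i, F i ^ σ.ν i := by
  rw [Finset.prod_comp, Finset.image_univ_of_surjective σ.surj]
  simp [ν]

theorem ν_pos (i : Fin d) : 0 < σ.ν i :=
  Finset.card_pos.mpr ⟨σ.rep i, by simp [σ.rep_mem i]⟩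

theorem blowup_apply_eq (x : ∀ i, Fin (σ.n i) → ℝ) {l : Fin m} {i : Fin d} (h : σ.β l = i)
    {a : Fin (N l)} {b : Fin (σ.n i)} (hab : (a : ℕ) = b) : σ.blowup x l a = x i b := by
  subst h
  exact congrArg (x _) (Fin.ext hab)

theorem blowup_congr (x : ∀ i, Fin (σ.n i) → ℝ) {l l' : Fin m} (h : σ.β l = σ.β l')
    {a : Fin (N l)} {b : Fin (N l')} (hab : (a : ℕ) = b) :
    σ.blowup x l a = σ.blowup x l' b :=
  σ.blowup_apply_eq x h (b := Fin.cast (σ.dim_n l') b) (by simpa using hab)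

noncomputable def blowupL : (∀ i, Fin (σ.n i) → ℝ) →L[ℝ] ∀ k, Fin (N k) → ℝ :=
  ContinuousLinearMap.pi fun k => ContinuousLinearMap.pi fun t =>
    coordL (σ.β k) (Fin.cast (σ.dim_n k) t)

theorem coe_blowupL : ⇑σ.blowupL = σ.blowup := rfl

variable {σ} {T : (∀ k, Fin (N k)) → ℝ}

theorem tmap_blowup_perm (hsym : σ.PartSymmetric T) (π : Equiv.Perm (Fin m))
    (hπ : ∀ k, σ.β (π k) = σ.β k) {k k' : Fin m} (hk : π k' = k) (t : Fin (N k))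
    (x : ∀ i, Fin (σ.n i) → ℝ) :
    tmap T k t (σ.blowup x) =
      tmap T k' (Fin.cast (σ.dim_eq k k' (by rw [← hk, hπ])) t) (σ.blowup x) := by
  subst hk
  let e : (∀ l, Fin (N l)) ≃ ∀ l, Fin (N l) :=
    (Equiv.piCongrLeft (fun l => Fin (N l)) π).symm.trans
      (Equiv.piCongrRight fun l => finCongr (σ.dim_eq (π l) l (hπ l)))
  refine Fintype.sum_equiv e _ _ fun J => ?_
  have hT : T (e J) = T J := hsym π hπ J
  have hprod : ∏ l ∈ Finset.univ.erase k', σ.blowup x l (e J l) =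
      ∏ l ∈ Finset.univ.erase (π k'), σ.blowup x l (J l) := by
    refine Finset.prod_nbij' π π.symm (by simp) (by simp [Equiv.symm_apply_eq]) (by simp)
      (by simp) fun l _ => σ.blowup_congr x (hπ l).symm (by simp [e])
  have hcond : e J k' = Fin.cast (σ.dim_eq _ _ (hπ k')) t ↔ J (π k') = t := by
    simp [e, Fin.cast_inj]
  simp only [hT, hprod, hcond]

theorem tmap_blowup_eq_rep (hsym : σ.PartSymmetric T) (x : ∀ i, Fin (σ.n i) → ℝ) (k : Fin m)
    (t : Fin (N k)) :
    tmap T k t (σ.blowup x) = tmap T (σ.rep (σ.β k)) (Fin.cast (σ.dim_n k) t) (σ.blowup x) := by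
  have hβ : σ.β (σ.rep (σ.β k)) = σ.β k := σ.rep_mem _
  refine tmap_blowup_perm hsym (Equiv.swap (σ.rep (σ.β k)) k) (fun l => ?_)
    (Equiv.swap_apply_left _ _) t x
  rw [Equiv.swap_apply_def]
  split_ifs <;> simp_all

theorem hasFDerivAt_mform_blowup (hsym : σ.PartSymmetric T) (x : ∀ i, Fin (σ.n i) → ℝ) :
    HasFDerivAt (fun y => mform T (σ.blowup y))
      (pairing fun i j => σ.ν i * tmap T (σ.rep i) j (σ.blowup x)) x := by
  refine ((hasFDerivAt_mform T _).comp x σ.blowupL.hasFDerivAt).congr_fderiv ?_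
  ext v
  have hreindex (k : Fin m) : ∑ t, tmap T k t (σ.blowup x) * σ.blowup v k t =
      ∑ j, tmap T (σ.rep (σ.β k)) j (σ.blowup x) * v (σ.β k) j :=
    Fintype.sum_equiv (finCongr (σ.dim_n k)) _ _ fun t => by rw [tmap_blowup_eq_rep hsym]; rfl
  simp only [ContinuousLinearMap.comp_apply, pairing_apply, coe_blowupL, hreindex,
    σ.sum_comp_β fun i => ∑ j, tmap T (σ.rep i) j (σ.blowup x) * v i j, Finset.mul_sum]
  exact Finset.sum_congr rfl fun i _ => Finset.sum_congr rfl fun j _ => (mul_assoc ..).symm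

variable {p : Fin d → ℝ} {lam : ℝ} {x : ∀ i, Fin (σ.n i) → ℝ}

theorem rayleigh_eq_mform_blowup (hx : ∀ i, pnorm (p i) (x i) = 1) :
    σ.rayleigh T p x = mform T (σ.blowup x) := by
  simp [rayleigh, hx]

theorem hasFDerivAt_rayleigh (hsym : σ.PartSymmetric T) (hp : ∀ i, 1 < p i)
    (hx : ∀ i, pnorm (p i) (x i) = 1) :
    HasFDerivAt (σ.rayleigh T p)
      (pairing fun i j => σ.ν i *
        (tmap T (σ.rep i) j (σ.blowup x) - mform T (σ.blowup x) * psi (p i) (x i) j)) x := by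
  refine (HasFDerivAt.div_of_apply_eq_one (hasFDerivAt_mform_blowup hsym x)
    (hasFDerivAt_prod_pnorm_pow σ.ν hp hx) (by simp [hx])).congr_fderiv ?_
  ext v
  simp [mul_sub, sub_mul, Finset.mul_sum, Finset.sum_sub_distrib, mul_assoc, mul_left_comm]

namespace IsEigenpair

theorem mform_blowup_eq (hm : 0 < m) (hp : ∀ i, 1 < p i) (h : σ.IsEigenpair T p lam x) :
    mform T (σ.blowup x) = lam := by
  set i := σ.β ⟨0, hm⟩
  have hx (t : Fin (σ.n i)) : σ.blowup x (σ.rep i) t = x i t :=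
    σ.blowup_apply_eq x (σ.rep_mem i) rfl
  rw [← sum_mul_tmap_eq_mform T (σ.rep i)]
  calc ∑ t, σ.blowup x (σ.rep i) t * tmap T (σ.rep i) t (σ.blowup x)
      = ∑ t, lam * |x i t| ^ p i := Finset.sum_congr rfl fun t _ => by
        rw [hx t, h.2 i t, mul_left_comm]
        exact congrArg (lam * ·) (mul_psi_self (by linarith [hp i]) (x i) t)
    _ = lam := by rw [← Finset.mul_sum, sum_abs_rpow_eq_one (by linarith [hp i]) (h.1 i), mul_one]

theorem rayleigh_eq (hm : 0 < m) (hp : ∀ i, 1 < p i) (h : σ.IsEigenpair T p lam x) :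
    σ.rayleigh T p x = lam := by
  rw [rayleigh_eq_mform_blowup h.1, h.mform_blowup_eq hm hp]

theorem fderiv_rayleigh_eq_zero (hm : 0 < m) (hsym : σ.PartSymmetric T) (hp : ∀ i, 1 < p i)
    (h : σ.IsEigenpair T p lam x) : fderiv ℝ (σ.rayleigh T p) x = 0 := by
  have hder := hasFDerivAt_rayleigh hsym hp h.1
  simp only [h.mform_blowup_eq hm hp, h.2, sub_self, mul_zero] at hder
  exact hder.fderiv.trans (pairing_eq_zero_iff.mpr rfl)

end IsEigenpair

theorem isEigenpair_of_fderiv_rayleigh_eq_zero (hsym : σ.PartSymmetric T) (hp : ∀ i, 1 < p i)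
    (hx : ∀ i, pnorm (p i) (x i) = 1) (hcrit : fderiv ℝ (σ.rayleigh T p) x = 0) :
    σ.IsEigenpair T p (σ.rayleigh T p x) x := by
  have hcoef := pairing_eq_zero_iff.mp ((hasFDerivAt_rayleigh hsym hp hx).fderiv.symm.trans hcrit)
  refine ⟨hx, fun i j => ?_⟩
  have hij := congr_fun₂ hcoef i j
  rw [rayleigh_eq_mform_blowup hx]
  have hν : (σ.ν i : ℝ) ≠ 0 := Nat.cast_ne_zero.mpr (σ.ν_pos i).ne'
  simpa [hν, sub_eq_zero] using hij

theorem mform_blowup_smul (c : Fin d → ℝ) (x : ∀ i, Fin (σ.n i) → ℝ) :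
    mform T (σ.blowup fun i => c i • x i) = (∏ i, c i ^ σ.ν i) * mform T (σ.blowup x) := by
  simp only [mform, Finset.mul_sum, ← σ.prod_comp_β]
  refine Finset.sum_congr rfl fun J _ => ?_
  simp only [blowup, Pi.smul_apply, smul_eq_mul, Finset.prod_mul_distrib]
  ring

theorem rayleigh_smul_of_pos (hp : ∀ i, 1 ≤ p i) {c : Fin d → ℝ} (hc : ∀ i, 0 < c i)
    (x : ∀ i, Fin (σ.n i) → ℝ) : σ.rayleigh T p (fun i => c i • x i) = σ.rayleigh T p x := by
  have hprod : ∏ i, c i ^ σ.ν i ≠ 0 := Finset.prod_ne_zero_iff.mpr fun i _ => by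
    have := hc i; positivity
  simp only [rayleigh, mform_blowup_smul, pnorm_smul (hp _), abs_of_pos (hc _), mul_pow,
    Finset.prod_mul_distrib]
  exact mul_div_mul_left _ _ hprod

theorem exists_unit_rayleigh_eq (hp : ∀ i, 1 ≤ p i) (hx : ∀ i, x i ≠ 0) :
    ∃ y : ∀ i, Fin (σ.n i) → ℝ, (∀ i, pnorm (p i) (y i) = 1) ∧
      σ.rayleigh T p y = σ.rayleigh T p x := by
  have hpos (i : Fin d) : 0 < pnorm (p i) (x i) := pnorm_pos (hp i) (hx i)
  refine ⟨fun i => (pnorm (p i) (x i))⁻¹ • x i, fun i => ?_,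
    σ.rayleigh_smul_of_pos hp (fun i => inv_pos.mpr (hpos i)) x⟩
  rw [pnorm_smul (hp i), abs_of_pos (inv_pos.mpr (hpos i)), inv_mul_cancel₀ (hpos i).ne']

theorem exists_isMaxOn_abs_rayleigh (hp : ∀ i, 1 ≤ p i) (hx : ∀ i, x i ≠ 0) :
    ∃ y : ∀ i, Fin (σ.n i) → ℝ, (∀ i, pnorm (p i) (y i) = 1) ∧
      IsMaxOn (fun z => |σ.rayleigh T p z|) {z | ∀ i, z i ≠ 0} y := by
  have hS : IsCompact (Set.univ.pi fun i => {v : Fin (σ.n i) → ℝ | pnorm (p i) v = 1}) :=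
    isCompact_univ_pi fun i => isCompact_pnorm_sphere (hp i)
  have hcont : Continuous fun y => |mform T (σ.blowup y)| := continuous_abs.comp <|
    (continuous_iff_continuousAt.2 fun z => (hasFDerivAt_mform T z).continuousAt).comp
      σ.blowupL.continuous
  obtain ⟨x₁, hx₁, -⟩ := σ.exists_unit_rayleigh_eq (T := T) hp hx
  obtain ⟨y, hyS, hmax⟩ := hS.exists_isMaxOn ⟨x₁, fun i _ => hx₁ i⟩ hcont.continuousOn
  have hy (i : Fin d) : pnorm (p i) (y i) = 1 := hyS i (Set.mem_univ i)
  refine ⟨y, hy, fun z hz => ?_⟩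
  obtain ⟨z₁, hz₁, hz₁_eq⟩ := σ.exists_unit_rayleigh_eq (T := T) hp hz
  change |σ.rayleigh T p z| ≤ |σ.rayleigh T p y|
  rw [← hz₁_eq, rayleigh_eq_mform_blowup hz₁, rayleigh_eq_mform_blowup hy]
  exact hmax fun i _ => hz₁ i

theorem exists_isEigenpair_abs_rayleigh_le (hsym : σ.PartSymmetric T) (hp : ∀ i, 1 < p i)
    (hx : ∀ i, x i ≠ 0) : ∃ lam y, σ.IsEigenpair T p lam y ∧ |σ.rayleigh T p x| ≤ |lam| := by
  obtain ⟨y, hy, hmax⟩ := σ.exists_isMaxOn_abs_rayleigh (T := T) (fun i => (hp i).le) hx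
  have hU : IsOpen {z : ∀ i, Fin (σ.n i) → ℝ | ∀ i, z i ≠ 0} := by
    simp only [Set.ofPred_forall]
    exact isOpen_iInter_of_finite fun i => isOpen_ne_fun (continuous_apply i) continuous_const
  have hyU : y ∈ {z : ∀ i, Fin (σ.n i) → ℝ | ∀ i, z i ≠ 0} :=
    fun i => ne_zero_of_pnorm_eq_one (hp i).le (hy i)
  have hcrit := IsLocalMax.fderiv_eq_zero_of_abs (hmax.isLocalMax (hU.mem_nhds hyU))
  exact ⟨_, y, isEigenpair_of_fderiv_rayleigh_eq_zero hsym hp hy hcrit, hmax hx⟩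

end ShapePartition

theorem eigenvectors_are_critical_points_general
    {m d : ℕ} (hm : 0 < m) {N : Fin m → ℕ}
    (T : (∀ k, Fin (N k)) → ℝ)
    (σ : ShapePartition m d N) (p : Fin d → ℝ) (hp : ∀ i, 1 < p i)
    (hsym : σ.PartSymmetric T) :
    (∀ (lam : ℝ) (x : ∀ i, Fin (σ.n i) → ℝ), σ.IsEigenpair T p lam x →
      fderiv ℝ (σ.rayleigh T p) x = 0 ∧ σ.rayleigh T p x = lam) ∧
    σ.tnorm T p = σ.specRad T p := by
  refine ⟨fun lam x hx => ⟨hx.fderiv_rayleigh_eq_zero hm hsym hp, hx.rayleigh_eq hm hp⟩, ?_⟩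
  refine csSup_eq_csSup_of_forall_exists_le ?_ ?_
  · rintro _ ⟨x, hx, rfl⟩
    obtain ⟨lam, y, hy, hle⟩ := σ.exists_isEigenpair_abs_rayleigh_le hsym hp hx
    exact ⟨_, ⟨lam, y, hy, rfl⟩, hle⟩
  · rintro _ ⟨lam, x, hx, rfl⟩
    refine ⟨_, ⟨x, fun i => ne_zero_of_pnorm_eq_one (hp i).le (hx.1 i), rfl⟩, ?_⟩
    rw [hx.rayleigh_eq hm hp]

/-- If `T` is σ-symmetric, then every `(σ,p)`-eigenvector of `T` is a
critical point of the Rayleigh quotient `Φ`, with critical value the corresponding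
eigenvalue; moreover `‖T‖_{(σ,p)} = r^{(σ,p)}(T)`. -/
theorem eigenvectors_are_critical_points
    {m d : ℕ} (hm : 0 < m) {N : Fin m → ℕ} (hN : ∀ k, 0 < N k)
    (T : (∀ k, Fin (N k)) → ℝ)
    (σ : ShapePartition m d N) (p : Fin d → ℝ) (hp : ∀ i, 1 < p i)
    (hsym : σ.PartSymmetric T) :
    (∀ (lam : ℝ) (x : ∀ i, Fin (σ.n i) → ℝ), σ.IsEigenpair T p lam x →
      fderiv ℝ (σ.rayleigh T p) x = 0 ∧ σ.rayleigh T p x = lam) ∧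
    σ.tnorm T p = σ.specRad T p :=
  eigenvectors_are_critical_points_general hm T σ p hp hsym

end TensorPF
end

section
/- Let T be a nonnegative tensor, σ a shape partition of T with d blocks, and fix any p ∈ (1,∞)^d. The following are equivalent: (i) T is σ-strongly irreducible; (ii) for every nonempty V ⊆ I^σ such that V_i := {l : (i,l) ∈ V} ≠ {1,…,n_i} for all i, there exist k ∈ {1,…,d} and indices j_1,…,j_m with T_{j_1,…,j_m} > 0, j_{s_k} ∈ V_k, j_t ∉ V_k for all t ∈ σ_k∖{s_k}, and j_t ∉ V_i for all t ∈ σ_i and i ≠ k; (iii) there exists N ≤ n_1+⋯+n_d − d such that for every j = (j_1,…,j_d) ∈ {1,…,n_1}×⋯×{1,…,n_d}, the iteration e^{l+1} = e^l + (𝒯_{s_1,·}((e^l)^[σ]),…,𝒯_{s_d,·}((e^l)^[σ])), started at the tuple e^0 whose i-th block is the j_i-th standard basis vector of ℝ^{n_i}, satisfies that e^N is entrywise positive; (iv) for every x^0 with all blocks in ℝ_+^{n_i} nonzero, there exists an integer N_{x} with x^{N_x} entrywise positive, where x^{l+1} = x^l + F^{(σ,p)}(x^l); (v) for every z with all blocks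 nonnegative and nonzero but z not entrywise positive, the zero set Q(F^{(σ,p)}(z)) = {(i,j) : F^{(σ,p)}_{i,j}(z) = 0} does not contain Q(z) = {(i,j) : z_{i,j} = 0}. -/
open scoped BigOperators

namespace TensorPF

/-!
Everything is decided by zero patterns. For nonnegative `x`, `𝒯_{s_k,l}(x^[σ]) > 0` iff some
`T_J > 0` has `J_{s_k} = l` and all its other indices in the support of `x`. So strong
irreducibility says that no proper zero pattern `V` is closed under `𝒯`, which is (ii); and since
`p_i' - 1 > 0`, `F^{(σ,p)}` has the same zeros as `𝒯`, which gives (v).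

For the iterations `y ↦ y + g(y)` with `g = 𝒯` or `g = F^{(σ,p)}`, the support never shrinks,
and under strong irreducibility it gains an index at every step until `y` is positive. It starts
with at least one index per block, so `n_1 + ⋯ + n_d - d` steps suffice. Conversely, a closed
proper zero pattern is invariant, so an iteration started inside it never becomes positive.
-/

section Tmap

variable {m : ℕ} {N : Fin m → ℕ} {T : (∀ k, Fin (N k)) → ℝ} {z w : ∀ l, Fin (N l) → ℝ}

lemma tmap_nonneg (hT : ∀ J, 0 ≤ T J) (hz : ∀ l t, 0 ≤ z l t) (k : Fin m) (j : Fin (N k)) :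
    0 ≤ tmap T k j z :=
  Finset.sum_nonneg fun J _ =>
    ite_nonneg (mul_nonneg (hT J) (Finset.prod_nonneg fun l _ => hz l _)) le_rfl

lemma tmap_pos_iff (hT : ∀ J, 0 ≤ T J) (hz : ∀ l t, 0 ≤ z l t) (k : Fin m) (j : Fin (N k)) :
    0 < tmap T k j z ↔ ∃ J : ∀ l, Fin (N l), J k = j ∧ 0 < T J ∧ ∀ l ≠ k, 0 < z l (J l) := by
  have hprod : ∀ J : ∀ l, Fin (N l),
      0 < ∏ l ∈ Finset.univ.erase k, z l (J l) ↔ ∀ l ≠ k, 0 < z l (J l) := fun J => by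
    simp only [(Finset.prod_nonneg fun l _ => hz l (J l)).lt_iff_ne', ne_eq,
      Finset.prod_eq_zero_iff, Finset.mem_erase, Finset.mem_univ, and_true, not_exists,
      not_and, (hz _ _).lt_iff_ne']
  rw [tmap, Finset.sum_pos_iff_of_nonneg fun J _ =>
    ite_nonneg (mul_nonneg (hT J) (Finset.prod_nonneg fun l _ => hz l _)) le_rfl]
  refine exists_congr fun J => ?_
  by_cases hJ : J k = j
  · simp only [Finset.mem_univ, hJ, if_true, true_and, ← hprod J]
    exact ⟨fun h => ⟨(hT J).lt_of_ne' (left_ne_zero_of_mul h.ne'),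
      pos_of_mul_pos_right h (hT J)⟩, fun h => mul_pos h.1 h.2⟩
  · simp [hJ]

lemma tmap_pos_of_pos_imp (hT : ∀ J, 0 ≤ T J) (hz : ∀ l t, 0 ≤ z l t) (hw : ∀ l t, 0 ≤ w l t)
    (hzw : ∀ l t, 0 < z l t → 0 < w l t) {k : Fin m} {j : Fin (N k)} (h : 0 < tmap T k j z) :
    0 < tmap T k j w :=
  have ⟨J, hJ, hTJ, hJz⟩ := (tmap_pos_iff hT hz k j).1 h
  (tmap_pos_iff hT hw k j).2 ⟨J, hJ, hTJ, fun l hl => hzw _ _ (hJz l hl)⟩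

end Tmap

section Iteration

variable {ι : Type*} {κ : ι → Type*}

lemma exists_pos_iff_ne_zero {v : ι → ℝ} (hv : ∀ j, 0 ≤ v j) : (∃ j, 0 < v j) ↔ v ≠ 0 := by
  simp only [ne_eq, funext_iff, Pi.zero_apply, not_forall, fun j => (hv j).lt_iff_ne']

lemma not_forall_pos_iff {x : ∀ i, κ i → ℝ} (hx : ∀ i j, 0 ≤ x i j) :
    (¬ ∀ i j, 0 < x i j) ↔ ∃ i j, x i j = 0 := by
  simp only [not_forall, fun i j => (hx i j).lt_iff_ne', ne_eq, not_not]

lemma eq_univ_of_ssubset_succ [Fintype ι] {S : ℕ → Finset ι} (hmono : ∀ l, S l ⊆ S (l + 1))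
    (hgrow : ∀ l, S l ≠ Finset.univ → S l ⊂ S (l + 1)) {L : ℕ}
    (hL : Fintype.card ι ≤ (S 0).card + L) : S L = Finset.univ := by
  have key : ∀ l, S l = Finset.univ ∨ (S 0).card + l ≤ (S l).card := by
    intro l
    induction l with
    | zero => exact Or.inr le_rfl
    | succ l ih =>
      by_cases hl : S l = Finset.univ
      · exact Or.inl (Finset.univ_subset_iff.1 (hl ▸ hmono l))
      · have h₁ := ih.resolve_left hl
        have h₂ := Finset.card_lt_card (hgrow l hl)
        exact Or.inr (by omega)
  exact (key L).elim id fun h =>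
    Finset.eq_univ_of_card _ (le_antisymm (Finset.card_le_univ _) (hL.trans h))

def addIterate (g : (∀ i, κ i → ℝ) → ∀ i, κ i → ℝ) (e₀ : ∀ i, κ i → ℝ) (l : ℕ) : ∀ i, κ i → ℝ :=
  (fun y i j => y i j + g y i j)^[l] e₀

lemma addIterate_succ (g : (∀ i, κ i → ℝ) → ∀ i, κ i → ℝ) (e₀ : ∀ i, κ i → ℝ) (l : ℕ) :
    addIterate g e₀ (l + 1) = fun i j => addIterate g e₀ l i j + g (addIterate g e₀ l) i j :=
  Function.iterate_succ_apply' _ _ _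

variable {g : (∀ i, κ i → ℝ) → ∀ i, κ i → ℝ} {e : ℕ → ∀ i, κ i → ℝ}

lemma iterate_nonneg (hg : ∀ y, (∀ i j, 0 ≤ y i j) → ∀ i j, 0 ≤ g y i j)
    (he : ∀ l, e (l + 1) = fun i j => e l i j + g (e l) i j) (he₀ : ∀ i j, 0 ≤ e 0 i j) :
    ∀ l i j, 0 ≤ e l i j := by
  intro l
  induction l with
  | zero => exact he₀
  | succ l ih => intro i j; rw [he]; exact add_nonneg (ih i j) (hg _ ih i j)

lemma iterate_mono (hg : ∀ y, (∀ i j, 0 ≤ y i j) → ∀ i j, 0 ≤ g y i j)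
    (he : ∀ l, e (l + 1) = fun i j => e l i j + g (e l) i j) (he₀ : ∀ i j, 0 ≤ e 0 i j)
    (i : ι) (j : κ i) : Monotone fun l => e l i j :=
  monotone_nat_of_le_succ fun l => by
    rw [he]; exact le_add_of_nonneg_right (hg _ (iterate_nonneg hg he he₀ l) i j)

end Iteration

namespace ShapePartition

variable {m d : ℕ} {N : Fin m → ℕ} (σ : ShapePartition m d N) {T : (∀ k, Fin (N k)) → ℝ}

def tmapBlock (T : (∀ k, Fin (N k)) → ℝ) (x : ∀ i, Fin (σ.n i) → ℝ) : ∀ i, Fin (σ.n i) → ℝ :=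
  fun i j => tmap T (σ.rep i) j (σ.blowup x)

def SameZerosAsTmapBlock (T : (∀ k, Fin (N k)) → ℝ)
    (g : (∀ i, Fin (σ.n i) → ℝ) → ∀ i, Fin (σ.n i) → ℝ) : Prop :=
  ∀ y : ∀ i, Fin (σ.n i) → ℝ, (∀ i j, 0 ≤ y i j) →
    ∀ i j, 0 ≤ g y i j ∧ (g y i j = 0 ↔ σ.tmapBlock T y i j = 0)

variable {σ}

lemma tmapBlock_nonneg (hT : ∀ J, 0 ≤ T J) {x : ∀ i, Fin (σ.n i) → ℝ} (hx : ∀ i j, 0 ≤ x i j)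
    (i : Fin d) (j : Fin (σ.n i)) : 0 ≤ σ.tmapBlock T x i j :=
  tmap_nonneg hT (fun _ _ => hx _ _) _ _

lemma sameZeros_tmapBlock (hT : ∀ J, 0 ≤ T J) : σ.SameZerosAsTmapBlock T (σ.tmapBlock T) :=
  fun _ hy i j => ⟨tmapBlock_nonneg hT hy i j, Iff.rfl⟩

lemma sameZeros_Fmap (hT : ∀ J, 0 ≤ T J) {p : Fin d → ℝ} (hp : ∀ i, 1 < p i) :
    σ.SameZerosAsTmapBlock T (σ.Fmap T p) := by
  intro y hy i j
  have hexp : p i / (p i - 1) - 1 ≠ 0 :=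
    (sub_pos.2 ((one_lt_div (sub_pos.2 (hp i))).2 (by linarith))).ne'
  exact ⟨Real.rpow_nonneg (tmapBlock_nonneg hT hy i j) _,
    Real.rpow_eq_zero (tmapBlock_nonneg hT hy i j) hexp⟩

lemma tmapBlock_eq_zero_of_closed (hT : ∀ J, 0 ≤ T J) {x y : ∀ i, Fin (σ.n i) → ℝ}
    (hx : ∀ i j, 0 ≤ x i j) (hclosed : ∀ i j, x i j = 0 → σ.tmapBlock T x i j = 0)
    (hy : ∀ i j, 0 ≤ y i j) (hyx : ∀ i j, x i j = 0 → y i j = 0)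
    {i : Fin d} {j : Fin (σ.n i)} (hxij : x i j = 0) : σ.tmapBlock T y i j = 0 := by
  by_contra hne
  have hpos : 0 < σ.tmapBlock T x i j :=
    tmap_pos_of_pos_imp hT (fun _ _ => hy _ _) (fun _ _ => hx _ _)
      (fun _ _ h => (hx _ _).lt_of_ne' fun h' => h.ne' (hyx _ _ h'))
      ((tmapBlock_nonneg hT hy i j).lt_of_ne' hne)
  exact hpos.ne' (hclosed i j hxij)

lemma exists_closed_of_not_stronglyIrreducible (hT : ∀ J, 0 ≤ T J)
    (h : ¬ σ.StronglyIrreducible T) :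
    ∃ x : ∀ i, Fin (σ.n i) → ℝ, (∀ i j, 0 ≤ x i j) ∧ (∀ i, x i ≠ 0) ∧ (∃ i j, x i j = 0) ∧
      ∀ i j, x i j = 0 → σ.tmapBlock T x i j = 0 := by
  simp only [StronglyIrreducible, not_forall, not_exists, not_and, not_lt] at h
  obtain ⟨x, hx, hne, ⟨i, j, hij⟩, hclosed⟩ := h
  exact ⟨x, hx, hne, ⟨i, j, le_antisymm hij (hx i j)⟩,
    fun i j h => le_antisymm (hclosed i j h) (tmapBlock_nonneg hT hx i j)⟩

variable {g : (∀ i, Fin (σ.n i) → ℝ) → ∀ i, Fin (σ.n i) → ℝ} {e : ℕ → ∀ i, Fin (σ.n i) → ℝ}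

theorem iterate_pos_of_stronglyIrreducible (hSI : σ.StronglyIrreducible T)
    (hg : σ.SameZerosAsTmapBlock T g) (he : ∀ l, e (l + 1) = fun i j => e l i j + g (e l) i j)
    (he₀ : ∀ i j, 0 ≤ e 0 i j) (he₀_ne : ∀ i, ∃ j, 0 < e 0 i j) :
    ∀ i j, 0 < e ((∑ i, σ.n i) - d) i j := by
  classical
  have hg₀ : ∀ y, (∀ i j, 0 ≤ y i j) → ∀ i j, 0 ≤ g y i j := fun y hy i j => (hg y hy i j).1
  have hnn := iterate_nonneg hg₀ he he₀
  have hmono := iterate_mono hg₀ he he₀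
  let S : ℕ → Finset (Σ i, Fin (σ.n i)) := fun l => {a | 0 < e l a.1 a.2}
  have hS : ∀ l a, a ∈ S l ↔ 0 < e l a.1 a.2 := by simp [S]
  have hsub : ∀ l, S l ⊆ S (l + 1) := fun l a => by
    simpa only [hS] using fun h => h.trans_le (hmono a.1 a.2 l.le_succ)
  have hgrow : ∀ l, S l ≠ Finset.univ → S l ⊂ S (l + 1) := by
    intro l hl
    have hnpos : ¬ ∀ i j, 0 < e l i j := fun h =>
      hl (Finset.eq_univ_of_forall fun a => (hS l a).2 (h a.1 a.2))
    have hne : ∀ i, e l i ≠ 0 := fun i => by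
      obtain ⟨j, hj⟩ := he₀_ne i
      exact (exists_pos_iff_ne_zero (hnn l i)).1 ⟨j, hj.trans_le (hmono i j l.zero_le)⟩
    obtain ⟨k, t, hkt, hpos⟩ := hSI (e l) (hnn l) hne hnpos
    have hgpos : 0 < g (e l) k t :=
      (hg _ (hnn l) k t).1.lt_of_ne' fun h => hpos.ne' ((hg _ (hnn l) k t).2.1 h)
    refine (Finset.ssubset_iff_of_subset (hsub l)).2 ⟨⟨k, t⟩, (hS _ _).2 ?_, by simp [hS, hkt]⟩
    simpa [he l, hkt] using hgpos
  have hcard₀ : d ≤ (S 0).card := by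
    choose f hf using he₀_ne
    have hinj : Function.Injective fun i => (⟨i, f i⟩ : Σ i, Fin (σ.n i)) :=
      fun _ _ h => congrArg Sigma.fst h
    simpa using Finset.card_le_card_of_injOn (s := Finset.univ) _
      (fun i _ => (hS 0 _).2 (hf i)) hinj.injOn
  have hL : Fintype.card (Σ i, Fin (σ.n i)) ≤ (S 0).card + ((∑ i, σ.n i) - d) := by
    simp only [Fintype.card_sigma, Fintype.card_fin]
    omega
  intro i j
  exact (hS _ ⟨i, j⟩).1 (eq_univ_of_ssubset_succ hsub hgrow hL ▸ Finset.mem_univ _)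

theorem iterate_eq_zero_of_closed (hT : ∀ J, 0 ≤ T J) {x : ∀ i, Fin (σ.n i) → ℝ}
    (hx : ∀ i j, 0 ≤ x i j) (hclosed : ∀ i j, x i j = 0 → σ.tmapBlock T x i j = 0)
    (hg : σ.SameZerosAsTmapBlock T g) (he : ∀ l, e (l + 1) = fun i j => e l i j + g (e l) i j)
    (he₀ : ∀ i j, 0 ≤ e 0 i j) (he₀x : ∀ i j, x i j = 0 → e 0 i j = 0) :
    ∀ l i j, x i j = 0 → e l i j = 0 := by
  have hnn := iterate_nonneg (fun y hy i j => (hg y hy i j).1) he he₀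
  intro l
  induction l with
  | zero => exact he₀x
  | succ l ih =>
    intro i j hxij
    simp only [he]
    rw [ih i j hxij, (hg _ (hnn l) i j).2.2
      (tmapBlock_eq_zero_of_closed hT hx hclosed (hnn l) ih hxij), add_zero]

lemma forall_ne_rep_iff (k : Fin d) {P : Fin m → Prop} :
    (∀ t, t ≠ σ.rep k → P t) ↔
      (∀ t, σ.β t = k → t ≠ σ.rep k → P t) ∧ (∀ t, σ.β t ≠ k → P t) := by
  refine ⟨fun h => ⟨fun t _ => h t, fun t ht => h t ?_⟩, fun h t ht => ?_⟩
  · rintro rfl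
    exact ht (σ.rep_mem k)
  · by_cases hβ : σ.β t = k
    exacts [h.1 t hβ ht, h.2 t hβ]

lemma exists_zero_tmapBlock_pos_iff (hT : ∀ J, 0 ≤ T J) {x : ∀ i, Fin (σ.n i) → ℝ}
    (hx : ∀ i j, 0 ≤ x i j) {V : Set (Σ i, Fin (σ.n i))} (hV : ∀ a, x a.1 a.2 = 0 ↔ a ∈ V) :
    (∃ k l, x k l = 0 ∧ 0 < σ.tmapBlock T x k l) ↔
      ∃ (k : Fin d) (J : ∀ l, Fin (N l)), 0 < T J ∧ ⟨k, J (σ.rep k)⟩ ∈ V ∧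
        ∀ t, t ≠ σ.rep k → ⟨σ.β t, Fin.cast (σ.dim_n t) (J t)⟩ ∉ V := by
  have hpos_iff := fun k l => tmap_pos_iff hT (z := σ.blowup x) (fun _ _ => hx _ _) (σ.rep k) l
  constructor
  · rintro ⟨k, l, hkl, hpos⟩
    obtain ⟨J, rfl, hTJ, hJ⟩ := (hpos_iff k l).1 hpos
    exact ⟨k, J, hTJ, (hV _).1 hkl, fun t ht hV' => (hJ t ht).ne' ((hV _).2 hV')⟩
  · rintro ⟨k, J, hTJ, hk, hJ⟩
    refine ⟨k, J (σ.rep k), (hV ⟨k, _⟩).2 hk, (hpos_iff k _).2 ⟨J, rfl, hTJ, fun t ht => ?_⟩⟩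
    exact (hx _ _).lt_of_ne' fun h => hJ t ht ((hV _).1 h)

theorem stronglyIrreducible_iff_forall_set (hT : ∀ J, 0 ≤ T J) :
    σ.StronglyIrreducible T ↔
      ∀ V : Set (Σ i, Fin (σ.n i)), V.Nonempty →
        (∀ i : Fin d, ∃ l : Fin (σ.n i), (⟨i, l⟩ : Σ i, Fin (σ.n i)) ∉ V) →
        ∃ (k : Fin d) (J : ∀ l, Fin (N l)), 0 < T J ∧
          (⟨k, J (σ.rep k)⟩ : Σ i, Fin (σ.n i)) ∈ V ∧
          (∀ t : Fin m, σ.β t = k → t ≠ σ.rep k →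
            (⟨σ.β t, Fin.cast (σ.dim_n t) (J t)⟩ : Σ i, Fin (σ.n i)) ∉ V) ∧
          (∀ t : Fin m, σ.β t ≠ k →
            (⟨σ.β t, Fin.cast (σ.dim_n t) (J t)⟩ : Σ i, Fin (σ.n i)) ∉ V) := by
  classical
  refine ⟨fun hSI V hV hVi => ?_, fun h x hx hne hnpos => ?_⟩
  · let x : ∀ i, Fin (σ.n i) → ℝ := fun i l => if (⟨i, l⟩ : Σ i, Fin (σ.n i)) ∈ V then 0 else 1
    have hxV : ∀ a, x a.1 a.2 = 0 ↔ a ∈ V := fun a => by simp [x]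
    have hx : ∀ i j, 0 ≤ x i j := fun i j => by simp only [x]; split_ifs <;> norm_num
    have hne : ∀ i, x i ≠ 0 := fun i hi => by
      obtain ⟨l, hl⟩ := hVi i
      exact hl ((hxV ⟨i, l⟩).1 (congr_fun hi l))
    have hnpos : ¬ ∀ i j, 0 < x i j := fun h => by
      obtain ⟨a, ha⟩ := hV
      exact (h a.1 a.2).ne' ((hxV a).2 ha)
    obtain ⟨k, J, hTJ, hk, hJ⟩ :=
      (exists_zero_tmapBlock_pos_iff hT hx hxV).1 (hSI x hx hne hnpos)
    exact ⟨k, J, hTJ, hk, (forall_ne_rep_iff k).1 hJ⟩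
  · obtain ⟨i, j, hij⟩ := (not_forall_pos_iff hx).1 hnpos
    obtain ⟨k, J, hTJ, hk, hJ⟩ := h {a | x a.1 a.2 = 0} ⟨⟨i, j⟩, hij⟩
      fun i => ((exists_pos_iff_ne_zero (hx i)).2 (hne i)).imp fun _ => ne_of_gt
    exact (exists_zero_tmapBlock_pos_iff hT hx fun _ => Iff.rfl).2
      ⟨k, J, hTJ, hk, (forall_ne_rep_iff k).2 hJ⟩

theorem stronglyIrreducible_iff_basis_iterate_pos (hT : ∀ J, 0 ≤ T J) :
    σ.StronglyIrreducible T ↔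
      ∃ Nsteps : ℕ, Nsteps ≤ (∑ i, σ.n i) - d ∧
        ∀ jj : ∀ i : Fin d, Fin (σ.n i),
          ∀ e : ℕ → ∀ i, Fin (σ.n i) → ℝ,
            (e 0 = fun i l => if l = jj i then 1 else 0) →
            (∀ l, e (l + 1) =
              fun i t => e l i t + tmap T (σ.rep i) t (σ.blowup (e l))) →
            ∀ i t, 0 < e Nsteps i t := by
  classical
  have hbasis_nonneg (jj : ∀ i, Fin (σ.n i)) :
      ∀ i l, (0 : ℝ) ≤ if l = jj i then 1 else 0 := fun i l => by split_ifs <;> norm_num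
  refine ⟨fun hSI => ⟨_, le_rfl, fun jj e he₀ he => ?_⟩, fun ⟨Nsteps, _, h⟩ => ?_⟩
  · exact iterate_pos_of_stronglyIrreducible hSI (sameZeros_tmapBlock hT) he
      (he₀ ▸ hbasis_nonneg jj) fun i => ⟨jj i, by simp [he₀]⟩
  · by_contra hSI
    obtain ⟨x, hx, hne, ⟨i, j, hij⟩, hclosed⟩ := exists_closed_of_not_stronglyIrreducible hT hSI
    choose jj hjj using fun i => (exists_pos_iff_ne_zero (hx i)).2 (hne i)
    have hzero := iterate_eq_zero_of_closed hT hx hclosed (sameZeros_tmapBlock hT)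
      (addIterate_succ _ _) (hbasis_nonneg jj)
      fun i l hil => if_neg fun (h : l = jj i) => (hjj i).ne' (h ▸ hil)
    exact (h jj _ rfl (addIterate_succ _ _) i j).ne' (hzero Nsteps i j hij)

theorem stronglyIrreducible_iff_Fmap_iterate_pos (hT : ∀ J, 0 ≤ T J) {p : Fin d → ℝ}
    (hp : ∀ i, 1 < p i) :
    σ.StronglyIrreducible T ↔
      ∀ x0 : ∀ i, Fin (σ.n i) → ℝ, (∀ i j, 0 ≤ x0 i j) → (∀ i, x0 i ≠ 0) →
        ∃ Nx : ℕ, ∀ xs : ℕ → ∀ i, Fin (σ.n i) → ℝ, xs 0 = x0 →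
          (∀ l, xs (l + 1) = fun i j => xs l i j + σ.Fmap T p (xs l) i j) →
          ∀ i j, 0 < xs Nx i j := by
  refine ⟨fun hSI x₀ hx₀ hne => ⟨(∑ i, σ.n i) - d, fun xs hxs₀ hxs => ?_⟩, fun h => ?_⟩
  · subst hxs₀
    exact iterate_pos_of_stronglyIrreducible hSI (sameZeros_Fmap hT hp) hxs hx₀
      fun i => (exists_pos_iff_ne_zero (hx₀ i)).2 (hne i)
  · by_contra hSI
    obtain ⟨x, hx, hne, ⟨i, j, hij⟩, hclosed⟩ := exists_closed_of_not_stronglyIrreducible hT hSI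
    obtain ⟨Nx, hNx⟩ := h x hx hne
    have hzero := iterate_eq_zero_of_closed hT hx hclosed (sameZeros_Fmap hT hp)
      (addIterate_succ _ _) hx fun _ _ => id
    exact (hNx _ rfl (addIterate_succ _ _) i j).ne' (hzero Nx i j hij)

theorem stronglyIrreducible_iff_zeroSet_not_subset (hT : ∀ J, 0 ≤ T J) {p : Fin d → ℝ}
    (hp : ∀ i, 1 < p i) :
    σ.StronglyIrreducible T ↔
      ∀ z : ∀ i, Fin (σ.n i) → ℝ, (∀ i j, 0 ≤ z i j) → (∀ i, z i ≠ 0) →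
        ¬ (∀ i j, 0 < z i j) →
        ¬ ({a : Σ i, Fin (σ.n i) | z a.1 a.2 = 0} ⊆
            {a : Σ i, Fin (σ.n i) | σ.Fmap T p z a.1 a.2 = 0}) := by
  refine ⟨fun hSI z hz hne hnpos hsub => ?_, fun h => ?_⟩
  · obtain ⟨k, l, hkl, hpos⟩ := hSI z hz hne hnpos
    exact hpos.ne' ((sameZeros_Fmap hT hp z hz k l).2.1 (hsub (a := ⟨k, l⟩) hkl))
  · by_contra hSI
    obtain ⟨x, hx, hne, hzero, hclosed⟩ := exists_closed_of_not_stronglyIrreducible hT hSI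
    exact h x hx hne ((not_forall_pos_iff hx).2 hzero)
      fun a ha => (sameZeros_Fmap hT hp x hx a.1 a.2).2.2 (hclosed _ _ ha)

end ShapePartition

theorem stronglyIrreducible_characterizations_general
    {m d : ℕ} {N : Fin m → ℕ}
    (T : (∀ k, Fin (N k)) → ℝ) (hT : ∀ J, 0 ≤ T J)
    (σ : ShapePartition m d N) (p : Fin d → ℝ) (hp : ∀ i, 1 < p i) :
    (σ.StronglyIrreducible T ↔
      ∀ V : Set (Σ i, Fin (σ.n i)), V.Nonempty →
        (∀ i : Fin d, ∃ l : Fin (σ.n i), (⟨i, l⟩ : Σ i, Fin (σ.n i)) ∉ V) →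
        ∃ (k : Fin d) (J : ∀ l, Fin (N l)), 0 < T J ∧
          (⟨k, J (σ.rep k)⟩ : Σ i, Fin (σ.n i)) ∈ V ∧
          (∀ t : Fin m, σ.β t = k → t ≠ σ.rep k →
            (⟨σ.β t, Fin.cast (σ.dim_n t) (J t)⟩ : Σ i, Fin (σ.n i)) ∉ V) ∧
          (∀ t : Fin m, σ.β t ≠ k →
            (⟨σ.β t, Fin.cast (σ.dim_n t) (J t)⟩ : Σ i, Fin (σ.n i)) ∉ V)) ∧
    (σ.StronglyIrreducible T ↔
      ∃ Nsteps : ℕ, Nsteps ≤ (∑ i, σ.n i) - d ∧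
        ∀ jj : ∀ i : Fin d, Fin (σ.n i),
          ∀ e : ℕ → ∀ i, Fin (σ.n i) → ℝ,
            (e 0 = fun i l => if l = jj i then 1 else 0) →
            (∀ l, e (l + 1) =
              fun i t => e l i t + tmap T (σ.rep i) t (σ.blowup (e l))) →
            ∀ i t, 0 < e Nsteps i t) ∧
    (σ.StronglyIrreducible T ↔
      ∀ x0 : ∀ i, Fin (σ.n i) → ℝ, (∀ i j, 0 ≤ x0 i j) → (∀ i, x0 i ≠ 0) →
        ∃ Nx : ℕ, ∀ xs : ℕ → ∀ i, Fin (σ.n i) → ℝ, xs 0 = x0 →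
          (∀ l, xs (l + 1) = fun i j => xs l i j + σ.Fmap T p (xs l) i j) →
          ∀ i j, 0 < xs Nx i j) ∧
    (σ.StronglyIrreducible T ↔
      ∀ z : ∀ i, Fin (σ.n i) → ℝ, (∀ i j, 0 ≤ z i j) → (∀ i, z i ≠ 0) →
        ¬ (∀ i j, 0 < z i j) →
        ¬ ({a : Σ i, Fin (σ.n i) | z a.1 a.2 = 0} ⊆
            {a : Σ i, Fin (σ.n i) | σ.Fmap T p z a.1 a.2 = 0})) :=
  ⟨σ.stronglyIrreducible_iff_forall_set hT, σ.stronglyIrreducible_iff_basis_iterate_pos hT,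
    σ.stronglyIrreducible_iff_Fmap_iterate_pos hT hp,
    σ.stronglyIrreducible_iff_zeroSet_not_subset hT hp⟩

/-- characterizations of σ-strong irreducibility (Lemma 6.6 of the
paper): the definition (i) is equivalent to (ii) the combinatorial condition on
proper index subsets, (iii) positivity of the additive `𝒯`-iteration started at any
tuple of standard basis vectors after at most `n₁+⋯+n_d − d` steps, (iv) eventual
positivity of the additive `F^{(σ,p)}`-iteration from any nonnegative tuple with
nonzero blocks, and (v) the zero-set of `F^{(σ,p)}(z)` never contains that of `z`. -/
theorem stronglyIrreducible_characterizations
    {m d : ℕ} (hm : 0 < m) {N : Fin m → ℕ} (hN : ∀ k, 0 < N k)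
    (T : (∀ k, Fin (N k)) → ℝ) (hT : ∀ J, 0 ≤ T J)
    (σ : ShapePartition m d N) (p : Fin d → ℝ) (hp : ∀ i, 1 < p i) :
    (σ.StronglyIrreducible T ↔
      ∀ V : Set (Σ i, Fin (σ.n i)), V.Nonempty →
        (∀ i : Fin d, ∃ l : Fin (σ.n i), (⟨i, l⟩ : Σ i, Fin (σ.n i)) ∉ V) →
        ∃ (k : Fin d) (J : ∀ l, Fin (N l)), 0 < T J ∧
          (⟨k, J (σ.rep k)⟩ : Σ i, Fin (σ.n i)) ∈ V ∧
          (∀ t : Fin m, σ.β t = k → t ≠ σ.rep k →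
            (⟨σ.β t, Fin.cast (σ.dim_n t) (J t)⟩ : Σ i, Fin (σ.n i)) ∉ V) ∧
          (∀ t : Fin m, σ.β t ≠ k →
            (⟨σ.β t, Fin.cast (σ.dim_n t) (J t)⟩ : Σ i, Fin (σ.n i)) ∉ V)) ∧
    (σ.StronglyIrreducible T ↔
      ∃ Nsteps : ℕ, Nsteps ≤ (∑ i, σ.n i) - d ∧
        ∀ jj : ∀ i : Fin d, Fin (σ.n i),
          ∀ e : ℕ → ∀ i, Fin (σ.n i) → ℝ,
            (e 0 = fun i l => if l = jj i then 1 else 0) →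
            (∀ l, e (l + 1) =
              fun i t => e l i t + tmap T (σ.rep i) t (σ.blowup (e l))) →
            ∀ i t, 0 < e Nsteps i t) ∧
    (σ.StronglyIrreducible T ↔
      ∀ x0 : ∀ i, Fin (σ.n i) → ℝ, (∀ i j, 0 ≤ x0 i j) → (∀ i, x0 i ≠ 0) →
        ∃ Nx : ℕ, ∀ xs : ℕ → ∀ i, Fin (σ.n i) → ℝ, xs 0 = x0 →
          (∀ l, xs (l + 1) = fun i j => xs l i j + σ.Fmap T p (xs l) i j) →
          ∀ i j, 0 < xs Nx i j) ∧
    (σ.StronglyIrreducible T ↔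
      ∀ z : ∀ i, Fin (σ.n i) → ℝ, (∀ i j, 0 ≤ z i j) → (∀ i, z i ≠ 0) →
        ¬ (∀ i j, 0 < z i j) →
        ¬ ({a : Σ i, Fin (σ.n i) | z a.1 a.2 = 0} ⊆
            {a : Σ i, Fin (σ.n i) | σ.Fmap T p z a.1 a.2 = 0})) :=
  stronglyIrreducible_characterizations_general T hT σ p hp

end TensorPF
end
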